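/- arXiv:2304.01303 — 6 statements merged into one kernel-verified Lean document; each statement's English description precedes it below -/
import Mathlib

section
/- Let X be a nonempty finite set and let P₁, P₂ be transition matrices on X (nonnegative entries, rows summing to 1), reversible with respect to everywhere-positive probability mass functions π₁ and π₂ respectively. Suppose that for each ordered pair ξ ≠ ξ̃ with (ξ, ξ̃) ∈ E_{P₂} a path γ_{ξ,ξ̃} from ξ to ξ̃ in E_{P₁} has been fixed, and define the congestion c = max over edges (τ, τ̃) ∈ E_{P₁} with τ ≠ τ̃ of (1/(π₁(τ)P₁(τ,τ̃))) · Σ over pairs (ξ,ξ̃) whose path γ_{ξ,ξ̃} contains (τ,τ̃) as a consecutive pair of states, of |γ_{ξ,ξ̃}| · π₂(ξ)P₂(ξ,ξ̃). Then E_{P₂}(f) ≤ c · E_{P₁}(f) for every function f : X → ℝ. -/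
/-!
Telescoping `f ξ - f ξ̃` along the path `γ ξ ξ̃` and applying Cauchy–Schwarz gives
`(f ξ - f ξ̃)² ≤ |γ| · Σ (f τ - f τ̃)²`, the sum running over the distinct edges of the path
(a path that reuses an edge is first shortened by erasing a loop). Weighting by `π₂(ξ)P₂(ξ,ξ̃)`,
summing and exchanging the two sums, every `P₁`-edge collects exactly the numerator of its
congestion ratio, which is at most `c · π₁(τ)P₁(τ,τ̃)`.
-/

open Finset

namespace List

variable {α : Type*}

theorem exists_eq_append_cons_append_cons_of_not_nodup {l : List α} (h : ¬ l.Nodup) :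
    ∃ p x q r, l = p ++ x :: (q ++ x :: r) := by
  obtain ⟨x, hx⟩ := not_forall_not.mp (mt nodup_iff_sublist.mpr h)
  obtain ⟨r₁, r₂, rfl, hx₁, hx₂⟩ := cons_sublist_iff.mp hx
  obtain ⟨p, q, rfl⟩ := append_of_mem hx₁
  obtain ⟨s, r, rfl⟩ := append_of_mem (singleton_sublist.mp hx₂)
  exact ⟨p, x, q ++ s, r, by simp⟩

theorem zip_tail_append_cons (u v : List α) (x : α) :
    (u ++ x :: v).zip (u ++ x :: v).tail = (u ++ [x]).zip (u ++ [x]).tail ++ (x :: v).zip v := by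
  induction u with
  | nil => simp
  | cons a u ih =>
    rcases u with _ | ⟨b, u⟩
    · simp
    · simp only [cons_append, tail_cons, zip_cons_cons] at *
      rw [ih]

theorem nodup_zip_tail {l : List α} (hl : l.Nodup) : (l.zip l.tail).Nodup :=
  Nodup.of_map Prod.snd <| by
    rw [map_snd_zip (by simp)]
    exact hl.sublist (tail_sublist l)

theorem sum_map_sub_zip_tail {M : Type*} [AddCommGroup M] (f : α → M) {l : List α} {a b : α}
    (ha : l.head? = some a) (hb : l.getLast? = some b) :
    ((l.zip l.tail).map fun e => f e.1 - f e.2).sum = f a - f b := by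
  induction l generalizing a with
  | nil => simp at ha
  | cons x t ih =>
    obtain rfl : x = a := by simpa using ha
    rcases t with _ | ⟨y, t⟩
    · obtain rfl : x = b := by simpa using hb
      simp
    · rw [getLast?_cons_cons] at hb
      simp only [tail_cons, zip_cons_cons, map_cons, sum_cons] at ih ⊢
      rw [ih rfl hb]
      abel

theorem exists_nodup_zip_tail_subset (l : List α) :
    ∃ l' : List α, l'.Nodup ∧ l'.head? = l.head? ∧ l'.getLast? = l.getLast? ∧
      l'.length ≤ l.length ∧ l'.zip l'.tail ⊆ l.zip l.tail := by
  by_cases hl : l.Nodup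
  · exact ⟨l, hl, rfl, rfl, le_rfl, Subset.refl _⟩
  obtain ⟨p, x, q, r, hpxqr⟩ := exists_eq_append_cons_append_cons_of_not_nodup hl
  obtain ⟨l', hnd, hhead, hlast, hlen, hsub⟩ := exists_nodup_zip_tail_subset (p ++ x :: r)
  subst hpxqr
  refine ⟨l', hnd, hhead.trans ?_, hlast.trans ?_, hlen.trans ?_, Subset.trans hsub ?_⟩
  · cases p <;> simp
  · rw [getLast?_append_cons, getLast?_append_cons, ← cons_append, getLast?_append_cons]
  · simp only [length_append, length_cons]
    omega
  · have hloop := zip_tail_append_cons (x :: q) r x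
    rw [cons_append, tail_cons] at hloop
    rw [zip_tail_append_cons p r, zip_tail_append_cons p (q ++ x :: r), hloop]
    exact append_subset.mpr ⟨subset_append_left _ _,
      subset_append_of_subset_right _ (subset_append_right _ _)⟩
termination_by l.length
decreasing_by simp only [hpxqr, length_append, length_cons]; omega

end List

theorem sq_sub_le_length_mul_sum_sq_zip_tail {α : Type*} [DecidableEq α] (f : α → ℝ)
    {l : List α} {a b : α} (ha : l.head? = some a) (hb : l.getLast? = some b) :
    (f a - f b) ^ 2 ≤
      ((l.length : ℝ) - 1) * ∑ e ∈ (l.zip l.tail).toFinset, (f e.1 - f e.2) ^ 2 := by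
  obtain ⟨l', hnd, hhead, hlast, hlen, hsub⟩ := l.exists_nodup_zip_tail_subset
  have hne : l' ≠ [] := by rintro rfl; simp [← hhead] at ha
  have hcard : ((l'.zip l'.tail).toFinset.card : ℝ) ≤ l.length - 1 := by
    rw [List.toFinset_card_of_nodup (List.nodup_zip_tail hnd), List.length_zip, List.length_tail,
      le_sub_iff_add_le]
    have := List.length_pos_iff.mpr hne
    exact_mod_cast (by omega : min l'.length (l'.length - 1) + 1 ≤ l.length)
  calc (f a - f b) ^ 2 = (∑ e ∈ (l'.zip l'.tail).toFinset, (f e.1 - f e.2)) ^ 2 := by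
        rw [List.sum_toFinset _ (List.nodup_zip_tail hnd),
          List.sum_map_sub_zip_tail f (hhead.trans ha) (hlast.trans hb)]
    _ ≤ (l'.zip l'.tail).toFinset.card * ∑ e ∈ (l'.zip l'.tail).toFinset, (f e.1 - f e.2) ^ 2 :=
        sq_sum_le_card_mul_sum_sq
    _ ≤ ((l.length : ℝ) - 1) * ∑ e ∈ (l.zip l.tail).toFinset, (f e.1 - f e.2) ^ 2 := by
        gcongr
        · exact (Nat.cast_nonneg _).trans hcard
        · exact fun e he => List.mem_toFinset.mpr (hsub (List.mem_toFinset.mp he))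

section Comparison

variable {X : Type*} [Fintype X] [DecidableEq X]

-- The numerator of the congestion ratio at `(τ, τ')`; a path list of length `n` has `n - 1` steps.
noncomputable def edgeLoad (w : X → X → ℝ) (γ : X → X → List X) (τ τ' : X) : ℝ :=
  ∑ e ∈ univ.filter (fun e : X × X => e.1 ≠ e.2 ∧ 0 < w e.1 e.2 ∧
      (τ, τ') ∈ (γ e.1 e.2).zip (γ e.1 e.2).tail),
    (((γ e.1 e.2).length : ℝ) - 1) * w e.1 e.2

theorem mul_sq_sub_le_sum_path_edges {w : X → X → ℝ} (hw : ∀ x y, 0 ≤ w x y)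
    {γ : X → X → List X}
    (hhead : ∀ ξ ξ', ξ ≠ ξ' → 0 < w ξ ξ' → (γ ξ ξ').head? = some ξ)
    (hlast : ∀ ξ ξ', ξ ≠ ξ' → 0 < w ξ ξ' → (γ ξ ξ').getLast? = some ξ')
    (f : X → ℝ) (ξ ξ' : X) :
    w ξ ξ' * (f ξ - f ξ') ^ 2 ≤
      ∑ e : X × X, (if ξ ≠ ξ' ∧ 0 < w ξ ξ' ∧ e ∈ (γ ξ ξ').zip (γ ξ ξ').tail then
        (((γ ξ ξ').length : ℝ) - 1) * w ξ ξ' else 0) * (f e.1 - f e.2) ^ 2 := by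
  by_cases hedge : ξ ≠ ξ' ∧ 0 < w ξ ξ'
  · obtain ⟨hne, hpos⟩ := hedge
    have hpath := sq_sub_le_length_mul_sum_sq_zip_tail f (hhead ξ ξ' hne hpos) (hlast ξ ξ' hne hpos)
    calc w ξ ξ' * (f ξ - f ξ') ^ 2
        ≤ w ξ ξ' * ((((γ ξ ξ').length : ℝ) - 1) *
            ∑ e ∈ ((γ ξ ξ').zip (γ ξ ξ').tail).toFinset, (f e.1 - f e.2) ^ 2) :=
          mul_le_mul_of_nonneg_left hpath hpos.le
      _ = _ := by
        simp only [hne, hpos, ne_eq, not_false_eq_true, true_and, ite_mul, zero_mul]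
        rw [← sum_filter, mul_sum, mul_sum]
        exact sum_congr (by ext; simp) fun e _ => by ring
  · have hzero : w ξ ξ' * (f ξ - f ξ') ^ 2 = 0 := by
      rcases not_and_or.mp hedge with hdiag | hnpos
      · rw [not_not.mp hdiag, sub_self, zero_pow two_ne_zero, mul_zero]
      · rw [le_antisymm (not_lt.mp hnpos) (hw ξ ξ'), zero_mul]
    rw [hzero]
    exact (sum_eq_zero fun e _ => by rw [if_neg fun h => hedge ⟨h.1, h.2.1⟩, zero_mul]).ge

theorem edgeLoad_mul_sq_sub_le {w₁ w₂ : X → X → ℝ} (hw₁ : ∀ x y, 0 ≤ w₁ x y)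
    {γ : X → X → List X}
    (hedge : ∀ ξ ξ', ξ ≠ ξ' → 0 < w₂ ξ ξ' →
      ∀ e ∈ (γ ξ ξ').zip (γ ξ ξ').tail, 0 < w₁ e.1 e.2)
    {c : ℝ} (hc : ∀ τ τ', τ ≠ τ' → 0 < w₁ τ τ' → edgeLoad w₂ γ τ τ' ≤ c * w₁ τ τ')
    (f : X → ℝ) (τ τ' : X) :
    edgeLoad w₂ γ τ τ' * (f τ - f τ') ^ 2 ≤ c * (w₁ τ τ' * (f τ - f τ') ^ 2) := by
  obtain rfl | hne := eq_or_ne τ τ'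
  · simp
  by_cases hpos : 0 < w₁ τ τ'
  · rw [← mul_assoc]
    exact mul_le_mul_of_nonneg_right (hc τ τ' hne hpos) (sq_nonneg _)
  · have hload : edgeLoad w₂ γ τ τ' = 0 := sum_eq_zero fun e he => by
      obtain ⟨-, hne', hpos', hmem⟩ := mem_filter.mp he
      exact absurd (hedge _ _ hne' hpos' _ hmem) hpos
    rw [hload, le_antisymm (not_lt.mp hpos) (hw₁ τ τ')]
    simp

theorem sum_mul_sq_sub_le_mul_of_edgeLoad_le {w₁ w₂ : X → X → ℝ} (hw₁ : ∀ x y, 0 ≤ w₁ x y)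
    (hw₂ : ∀ x y, 0 ≤ w₂ x y) {γ : X → X → List X}
    (hhead : ∀ ξ ξ', ξ ≠ ξ' → 0 < w₂ ξ ξ' → (γ ξ ξ').head? = some ξ)
    (hlast : ∀ ξ ξ', ξ ≠ ξ' → 0 < w₂ ξ ξ' → (γ ξ ξ').getLast? = some ξ')
    (hedge : ∀ ξ ξ', ξ ≠ ξ' → 0 < w₂ ξ ξ' →
      ∀ e ∈ (γ ξ ξ').zip (γ ξ ξ').tail, 0 < w₁ e.1 e.2)
    {c : ℝ} (hc : ∀ τ τ', τ ≠ τ' → 0 < w₁ τ τ' → edgeLoad w₂ γ τ τ' ≤ c * w₁ τ τ')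
    (f : X → ℝ) :
    ∑ x, ∑ y, w₂ x y * (f x - f y) ^ 2 ≤ c * ∑ x, ∑ y, w₁ x y * (f x - f y) ^ 2 := by
  calc ∑ x, ∑ y, w₂ x y * (f x - f y) ^ 2
      ≤ ∑ x, ∑ y, ∑ e : X × X,
          (if x ≠ y ∧ 0 < w₂ x y ∧ e ∈ (γ x y).zip (γ x y).tail then
            (((γ x y).length : ℝ) - 1) * w₂ x y else 0) * (f e.1 - f e.2) ^ 2 :=
        sum_le_sum fun x _ => sum_le_sum fun y _ =>
          mul_sq_sub_le_sum_path_edges hw₂ hhead hlast f x y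
    _ = ∑ e : X × X, edgeLoad w₂ γ e.1 e.2 * (f e.1 - f e.2) ^ 2 := by
        rw [← Fintype.sum_prod_type', sum_comm]
        refine sum_congr rfl fun e _ => ?_
        rw [← sum_mul, edgeLoad, sum_filter]
    _ ≤ ∑ e : X × X, c * (w₁ e.1 e.2 * (f e.1 - f e.2) ^ 2) :=
        sum_le_sum fun e _ => edgeLoad_mul_sq_sub_le hw₁ hedge hc f e.1 e.2
    _ = c * ∑ x, ∑ y, w₁ x y * (f x - f y) ^ 2 := by
        rw [← mul_sum, Fintype.sum_prod_type]

end Comparison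

theorem stmt_0_general {X : Type*} [Fintype X] [DecidableEq X]
    (P₁ P₂ : X → X → ℝ) (π₁ π₂ : X → ℝ)
    (hP₁nn : ∀ x y, 0 ≤ P₁ x y)
    (hP₂nn : ∀ x y, 0 ≤ P₂ x y)
    (hπ₁pos : ∀ x, 0 < π₁ x)
    (hπ₂pos : ∀ x, 0 < π₂ x)
    (γ : X → X → List X)
    (hγhead : ∀ ξ ξ', ξ ≠ ξ' → 0 < π₂ ξ * P₂ ξ ξ' → (γ ξ ξ').head? = some ξ)
    (hγlast : ∀ ξ ξ', ξ ≠ ξ' → 0 < π₂ ξ * P₂ ξ ξ' → (γ ξ ξ').getLast? = some ξ')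
    (hγedge : ∀ ξ ξ', ξ ≠ ξ' → 0 < π₂ ξ * P₂ ξ ξ' →
      ∀ e ∈ (γ ξ ξ').zip (γ ξ ξ').tail, 0 < π₁ e.1 * P₁ e.1 e.2)
    (c : ℝ)
    (hc : ∀ τ τ', τ ≠ τ' → 0 < π₁ τ * P₁ τ τ' →
      (∑ e ∈ Finset.univ.filter (fun e : X × X => e.1 ≠ e.2 ∧ 0 < π₂ e.1 * P₂ e.1 e.2 ∧
          (τ, τ') ∈ (γ e.1 e.2).zip (γ e.1 e.2).tail),
        (((γ e.1 e.2).length : ℝ) - 1) * (π₂ e.1 * P₂ e.1 e.2)) ≤ c * (π₁ τ * P₁ τ τ')) :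
    ∀ f : X → ℝ,
      1 / 2 * ∑ x, ∑ y, π₂ x * P₂ x y * (f x - f y) ^ 2 ≤
        c * (1 / 2 * ∑ x, ∑ y, π₁ x * P₁ x y * (f x - f y) ^ 2) := by
  intro f
  have hcomparison := sum_mul_sq_sub_le_mul_of_edgeLoad_le
    (w₁ := fun x y => π₁ x * P₁ x y) (w₂ := fun x y => π₂ x * P₂ x y)
    (fun x y => mul_nonneg (hπ₁pos x).le (hP₁nn x y))
    (fun x y => mul_nonneg (hπ₂pos x).le (hP₂nn x y))
    hγhead hγlast hγedge hc f
  linarith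

/-- canonical path / comparison theorem: let `P₁, P₂` be transition matrices
on a nonempty finite set `X`, reversible with respect to everywhere-positive probability mass
functions `π₁, π₂`.  Suppose for each ordered pair `ξ ≠ ξ̃` in the edge set `E_{P₂}` a path
`γ ξ ξ̃` from `ξ` to `ξ̃` whose consecutive pairs lie in `E_{P₁}` has been fixed, and that
`c` bounds the congestion: for every edge `(τ, τ̃) ∈ E_{P₁}` with `τ ≠ τ̃`,
`Σ_{(ξ,ξ̃) : (τ,τ̃) ∈ γ_{ξ,ξ̃}} |γ_{ξ,ξ̃}| π₂(ξ)P₂(ξ,ξ̃) ≤ c ⋅ π₁(τ)P₁(τ,τ̃)`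
(so the congestion `max` is at most `c`, and in particular the conclusion holds for `c`
equal to the congestion itself).  Then `E_{P₂}(f) ≤ c ⋅ E_{P₁}(f)` for every `f : X → ℝ`,
where `E_P(f) = (1/2) Σ_{x,y} π(x)P(x,y)(f(x) − f(y))²`. -/
theorem stmt_0 {X : Type*} [Fintype X] [DecidableEq X] [Nonempty X]
    (P₁ P₂ : X → X → ℝ) (π₁ π₂ : X → ℝ)
    (hP₁nn : ∀ x y, 0 ≤ P₁ x y) (hP₁row : ∀ x, ∑ y, P₁ x y = 1)
    (hP₂nn : ∀ x y, 0 ≤ P₂ x y) (hP₂row : ∀ x, ∑ y, P₂ x y = 1)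
    (hπ₁pos : ∀ x, 0 < π₁ x) (hπ₁sum : ∑ x, π₁ x = 1)
    (hπ₂pos : ∀ x, 0 < π₂ x) (hπ₂sum : ∑ x, π₂ x = 1)
    (hrev₁ : ∀ x y, π₁ x * P₁ x y = π₁ y * P₁ y x)
    (hrev₂ : ∀ x y, π₂ x * P₂ x y = π₂ y * P₂ y x)
    (γ : X → X → List X)
    (hγhead : ∀ ξ ξ', ξ ≠ ξ' → 0 < π₂ ξ * P₂ ξ ξ' → (γ ξ ξ').head? = some ξ)
    (hγlast : ∀ ξ ξ', ξ ≠ ξ' → 0 < π₂ ξ * P₂ ξ ξ' → (γ ξ ξ').getLast? = some ξ')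
    (hγedge : ∀ ξ ξ', ξ ≠ ξ' → 0 < π₂ ξ * P₂ ξ ξ' →
      ∀ e ∈ (γ ξ ξ').zip (γ ξ ξ').tail, 0 < π₁ e.1 * P₁ e.1 e.2)
    (c : ℝ)
    (hc : ∀ τ τ', τ ≠ τ' → 0 < π₁ τ * P₁ τ τ' →
      (∑ e ∈ Finset.univ.filter (fun e : X × X => e.1 ≠ e.2 ∧ 0 < π₂ e.1 * P₂ e.1 e.2 ∧
          (τ, τ') ∈ (γ e.1 e.2).zip (γ e.1 e.2).tail),
        (((γ e.1 e.2).length : ℝ) - 1) * (π₂ e.1 * P₂ e.1 e.2)) ≤ c * (π₁ τ * P₁ τ τ')) :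
    ∀ f : X → ℝ,
      1 / 2 * ∑ x, ∑ y, π₂ x * P₂ x y * (f x - f y) ^ 2 ≤
        c * (1 / 2 * ∑ x, ∑ y, π₁ x * P₁ x y * (f x - f y) ^ 2) :=
  stmt_0_general P₁ P₂ π₁ π₂ hP₁nn hP₂nn hπ₁pos hπ₂pos γ hγhead hγlast hγedge c hc
end

section
/- Let L ≥ 0 and m ≥ 1 be integers, let 0 ≤ i < j ≤ L, and let λ ∈ {1,…,m}^{L+1}. Then every state occurring on the path obtained by applying the transpositions of Swap(i,j) in order to λ differs from λ in at most 3⌈log₂(j−i)⌉ + 2 coordinates. -/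
/-! By induction, `Swap(i,j)` as a whole acts as the transposition `(i j)`, since
`(i h)(h j)(i h) = (i j)`. So each of the three blocks of `Swap(i,j)` starts from one of `λ`,
`λ ∘ (i h)`, `λ ∘ (i h) ∘ (h j)`, which differ from `λ` in at most `0`, `2`, `3` coordinates, and
runs over an interval of length at most `⌈(j-i)/2⌉`, whose `⌈log₂⌉` is one less than that of
`j - i`. The triangle inequality for the Hamming distance then carries the bound
`3 ⌈log₂ (j-i)⌉ + 2` through the recursion. -/

/-- The recursively defined sequence `Swap(i,j)` of transpositions of coordinate indices:
if `j − i ≤ 1` it is the single transposition `(i,j)`; otherwise, with `h = ⌊(i+j)/2⌋`,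
it is `Swap(i,h) ++ Swap(h,j) ++ Swap(i,h)`. -/
def swapSeq (i j : ℕ) : List (ℕ × ℕ) :=
  if j ≤ i + 1 then [(i, j)]
  else swapSeq i ((i + j) / 2) ++ swapSeq ((i + j) / 2) j ++ swapSeq i ((i + j) / 2)
termination_by j - i
decreasing_by all_goals omega

/-- Applying a transposition `(a, b)` of coordinate indices to a state: the coordinates
`a` and `b` are exchanged. -/
def applyT {L m : ℕ} (σ : Fin (L + 1) → Fin m) (t : ℕ × ℕ) : Fin (L + 1) → Fin m :=
  if h : t.1 < L + 1 ∧ t.2 < L + 1 then σ ∘ Equiv.swap ⟨t.1, h.1⟩ ⟨t.2, h.2⟩ else σ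

open Equiv Finset

theorem List.mem_scanl_or_of_mem_scanl_append {α β : Type*} {f : α → β → α} {b a : α}
    {l₁ l₂ : List β} (h : a ∈ List.scanl f b (l₁ ++ l₂)) :
    a ∈ List.scanl f b l₁ ∨ a ∈ List.scanl f (List.foldl f b l₁) l₂ := by
  rw [List.scanl_append, List.mem_append] at h
  exact h.imp_right List.mem_of_mem_tail

theorem Nat.clog_two_add_one_le {k n : ℕ} (hn : 2 ≤ n) (hk : k ≤ (n + 1) / 2) :
    Nat.clog 2 k + 1 ≤ Nat.clog 2 n := by
  rw [Nat.clog_of_two_le one_lt_two hn]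
  exact Nat.add_le_add_right (Nat.clog_mono_right 2 hk) 1

theorem Real.ceil_logb_natCast_eq_clog (b n : ℕ) : ⌈Real.logb b n⌉ = Nat.clog b n := by
  rw [Real.ceil_logb_natCast n.cast_nonneg, Int.clog_natCast]

theorem Fin.hammingDist_le_card_of_forall_val_notMem {n : ℕ} {β : Type*} [DecidableEq β]
    {x y : Fin n → β} (S : Finset ℕ) (h : ∀ ℓ : Fin n, ↑ℓ ∉ S → x ℓ = y ℓ) :
    hammingDist x y ≤ #S := by
  refine card_le_card_of_injOn Fin.val (fun ℓ hℓ => ?_) Fin.val_injective.injOn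
  by_contra hS
  exact (mem_filter.mp hℓ).2 (h ℓ hS)

section applyT

variable {L m : ℕ}

theorem applyT_of_lt (σ : Fin (L + 1) → Fin m) {a b : ℕ} (ha : a < L + 1) (hb : b < L + 1) :
    applyT σ (a, b) = σ ∘ swap ⟨a, ha⟩ ⟨b, hb⟩ :=
  dif_pos ⟨ha, hb⟩

theorem applyT_apply_of_ne (σ : Fin (L + 1) → Fin m) {a b : ℕ} {ℓ : Fin (L + 1)}
    (ha : (ℓ : ℕ) ≠ a) (hb : (ℓ : ℕ) ≠ b) : applyT σ (a, b) ℓ = σ ℓ := by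
  unfold applyT
  split_ifs
  · exact congrArg σ (swap_apply_of_ne_of_ne (Fin.ne_of_val_ne ha) (Fin.ne_of_val_ne hb))
  · rfl

theorem hammingDist_applyT_le (σ : Fin (L + 1) → Fin m) (a b : ℕ) :
    hammingDist (applyT σ (a, b)) σ ≤ 2 := by
  refine (Fin.hammingDist_le_card_of_forall_val_notMem {a, b} fun ℓ hℓ => ?_).trans card_le_two
  simp only [mem_insert, mem_singleton, not_or] at hℓ
  exact applyT_apply_of_ne σ hℓ.1 hℓ.2

theorem hammingDist_applyT_applyT_le (σ : Fin (L + 1) → Fin m) (a b c : ℕ) :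
    hammingDist (applyT (applyT σ (a, b)) (b, c)) σ ≤ 3 := by
  refine (Fin.hammingDist_le_card_of_forall_val_notMem {a, b, c} fun ℓ hℓ => ?_).trans card_le_three
  simp only [mem_insert, mem_singleton, not_or] at hℓ
  rw [applyT_apply_of_ne _ hℓ.2.1 hℓ.2.2, applyT_apply_of_ne σ hℓ.1 hℓ.2.1]

theorem foldl_applyT_swapSeq {i j : ℕ} (hij : i < j) (hjL : j ≤ L) (σ : Fin (L + 1) → Fin m) :
    (swapSeq i j).foldl applyT σ = applyT σ (i, j) := by
  induction i, j using swapSeq.induct generalizing σ with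
  | case1 i j hbase => rw [swapSeq.eq_def, if_pos hbase]; rfl
  | case2 i j hbase ihl ihr =>
    rw [swapSeq.eq_def, if_neg hbase]
    set h := (i + j) / 2 with hmid
    rw [List.foldl_append, List.foldl_append, ihl (by omega) (by omega), ihr (by omega) hjL,
      ihl (by omega) (by omega)]
    have hi : i < L + 1 := by omega
    have hh : h < L + 1 := by omega
    have hj : j < L + 1 := by omega
    have hjh : (⟨j, hj⟩ : Fin (L + 1)) ≠ ⟨h, hh⟩ := Fin.ne_of_val_ne (show j ≠ h by omega)
    have hji : (⟨j, hj⟩ : Fin (L + 1)) ≠ ⟨i, hi⟩ := Fin.ne_of_val_ne (show j ≠ i by omega)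
    have hconj := swap_mul_swap_mul_swap hjh hji
    rw [swap_comm (⟨h, hh⟩ : Fin (L + 1)), swap_comm (⟨j, hj⟩ : Fin (L + 1))] at hconj
    simp only [applyT_of_lt _ hi hh, applyT_of_lt _ hh hj, applyT_of_lt _ hi hj, ← hconj,
      Perm.coe_mul, Function.comp_assoc]

theorem hammingDist_le_of_mem_scanl_swapSeq {i j : ℕ} (hij : i < j) (hjL : j ≤ L)
    (σ : Fin (L + 1) → Fin m) :
    ∀ τ ∈ (swapSeq i j).scanl applyT σ, hammingDist τ σ ≤ 3 * Nat.clog 2 (j - i) + 2 := by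
  induction i, j using swapSeq.induct generalizing σ with
  | case1 i j hbase =>
    intro τ hτ
    rw [swapSeq.eq_def, if_pos hbase] at hτ
    simp only [List.scanl_cons, List.scanl_nil, List.mem_cons, List.not_mem_nil, or_false] at hτ
    rcases hτ with rfl | rfl
    · simp
    · exact (hammingDist_applyT_le σ i j).trans (by omega)
  | case2 i j hbase ihl ihr =>
    intro τ hτ
    rw [swapSeq.eq_def, if_neg hbase] at hτ
    set h := (i + j) / 2 with hmid
    have hclogl := Nat.clog_two_add_one_le (k := h - i) (n := j - i) (by omega) (by omega)
    have hclogr := Nat.clog_two_add_one_le (k := j - h) (n := j - i) (by omega) (by omega)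
    rcases List.mem_scanl_or_of_mem_scanl_append hτ with hτ | hτ
    · rcases List.mem_scanl_or_of_mem_scanl_append hτ with hτ | hτ
      · have := ihl (by omega) (by omega) σ τ hτ
        omega
      · rw [foldl_applyT_swapSeq (by omega) (by omega)] at hτ
        have := ihr (by omega) hjL _ τ hτ
        have := hammingDist_triangle τ (applyT σ (i, h)) σ
        have := hammingDist_applyT_le σ i h
        omega
    · rw [List.foldl_append, foldl_applyT_swapSeq (i := i) (j := h) (by omega) (by omega),
        foldl_applyT_swapSeq (i := h) (by omega) hjL] at hτ
      have := ihl (by omega) (by omega) _ τ hτ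
      have := hammingDist_triangle τ (applyT (applyT σ (i, h)) (h, j)) σ
      have := hammingDist_applyT_applyT_le σ i h j
      omega

end applyT

theorem stmt_2_general (L m : ℕ) (i j : ℕ) (hij : i < j) (hjL : j ≤ L)
    (lam : Fin (L + 1) → Fin m) :
    ∀ τ ∈ List.scanl applyT lam (swapSeq i j),
      ((Finset.univ.filter fun ℓ => τ ℓ ≠ lam ℓ).card : ℤ) ≤
        3 * ⌈Real.logb 2 ((j : ℝ) - (i : ℝ))⌉ + 2 := by
  intro τ hτ
  have hbound := hammingDist_le_of_mem_scanl_swapSeq hij hjL lam τ hτ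
  rw [← Nat.cast_sub hij.le, show (2 : ℝ) = (2 : ℕ) from rfl, Real.ceil_logb_natCast_eq_clog]
  exact_mod_cast hbound

/-- for `0 ≤ i < j ≤ L` and `λ ∈ {1,…,m}^{L+1}` (states encoded as
`Fin (L+1) → Fin m`), every state on the path obtained by applying the transpositions of
`Swap(i,j)` in order to `λ` differs from `λ` in at most `3⌈log₂(j−i)⌉ + 2` coordinates. -/
theorem stmt_2 (L m : ℕ) (hm : 1 ≤ m) (i j : ℕ) (hij : i < j) (hjL : j ≤ L)
    (lam : Fin (L + 1) → Fin m) :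
    ∀ τ ∈ List.scanl applyT lam (swapSeq i j),
      ((Finset.univ.filter fun ℓ => τ ℓ ≠ lam ℓ).card : ℤ) ≤
        3 * ⌈Real.logb 2 ((j : ℝ) - (i : ℝ))⌉ + 2 :=
  stmt_2_general L m i j hij hjL lam
end

section
/- Let F be the function from the positive integers to the positive integers defined by F(1) = 1 and F(ℓ) = 2F(⌊ℓ/2⌋) + F(⌈ℓ/2⌉) for ℓ ≥ 2. Then F is nondecreasing and F(ℓ) ≤ (2ℓ)^{log₂ 3} for every integer ℓ ≥ 1. -/
/-!
Each argument of the recursion moves by at most one when `ℓ` does, so strong induction gives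
`F ℓ ≤ F (ℓ + 1)`. On powers of two the recursion reads `F (2 ^ (k+1)) = 3 F (2 ^ k)`, so
`F (2 ^ k) = 3 ^ k = (2 ^ k) ^ log₂ 3`; bounding `F ℓ` by `F` at the next power of two,
which is at most `2ℓ`, gives the estimate.
-/

lemma Nat.pow_clog_le_mul {b n : ℕ} (hb : 1 < b) (hn : 1 ≤ n) : b ^ Nat.clog b n ≤ b * n := by
  rcases hn.eq_or_lt with rfl | hn
  · simp only [Nat.clog_one_right, pow_zero, mul_one]
    omega
  · have hpos := Nat.clog_pos hb hn
    calc b ^ Nat.clog b n = b * b ^ (Nat.clog b n - 1) := by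
          rw [← pow_succ']; congr 1; omega
      _ ≤ b * n := Nat.mul_le_mul_left b (Nat.pow_pred_clog_lt_self hb hn).le

lemma Real.pow_eq_pow_rpow_logb {b : ℝ} (hb₀ : 0 < b) (hb₁ : b ≠ 1) {c : ℝ} (hc : 0 < c)
    (k : ℕ) : c ^ k = (b ^ k) ^ Real.logb b c := by
  rw [← Real.rpow_natCast b k, ← Real.rpow_mul hb₀.le, mul_comm, Real.rpow_mul hb₀.le,
    Real.rpow_logb hb₀ hb₁ hc, Real.rpow_natCast]

section HalvingRecursion

variable {F : ℕ → ℕ} (hrec : ∀ ℓ : ℕ, 2 ≤ ℓ → F ℓ = 2 * F (ℓ / 2) + F ((ℓ + 1) / 2))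
include hrec

lemma le_succ_of_halving_rec {ℓ : ℕ} (hℓ : 1 ≤ ℓ) : F ℓ ≤ F (ℓ + 1) := by
  induction ℓ using Nat.strong_induction_on with
  | _ ℓ ih =>
    rcases hℓ.eq_or_lt with rfl | hℓ
    · have := hrec 2 le_rfl
      norm_num at this ⊢
      omega
    · have step : ∀ m n, m = ℓ / 2 ∨ m = (ℓ + 1) / 2 → n = m ∨ n = m + 1 → F m ≤ F n := by
        rintro m n hm (rfl | rfl)
        · exact le_rfl
        · exact ih m (by omega) (by omega)
      have hlo := step (ℓ / 2) ((ℓ + 1) / 2) (.inl rfl) (by omega)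
      have hhi := step ((ℓ + 1) / 2) ((ℓ + 1 + 1) / 2) (.inr rfl) (by omega)
      rw [hrec ℓ hℓ, hrec (ℓ + 1) (by omega)]
      omega

lemma monotoneOn_of_halving_rec : MonotoneOn F {x | 1 ≤ x} :=
  monotoneOn_nat_Ici_of_le_succ fun _ hn ↦ le_succ_of_halving_rec hrec hn

lemma apply_two_pow_of_halving_rec (k : ℕ) : F (2 ^ k) = 3 ^ k * F 1 := by
  induction k with
  | zero => simp
  | succ k ih =>
    have hk := Nat.one_le_two_pow (n := k)
    rw [hrec _ (by omega), show 2 ^ (k + 1) / 2 = 2 ^ k by omega,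
      show (2 ^ (k + 1) + 1) / 2 = 2 ^ k by omega, ih]
    ring

end HalvingRecursion

/-- For `F` with `F(1) = 1` and `F(ℓ) = 2F(⌊ℓ/2⌋) + F(⌈ℓ/2⌉)` for `ℓ ≥ 2`,
`F` is nondecreasing (on the positive integers) and `F(ℓ) ≤ (2ℓ)^(log₂ 3)` for `ℓ ≥ 1`. -/
theorem stmt_4 (F : ℕ → ℕ) (h1 : F 1 = 1)
    (hrec : ∀ ℓ : ℕ, 2 ≤ ℓ → F ℓ = 2 * F (ℓ / 2) + F ((ℓ + 1) / 2)) :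
    (∀ a b : ℕ, 1 ≤ a → a ≤ b → F a ≤ F b) ∧
    ∀ ℓ : ℕ, 1 ≤ ℓ → (F ℓ : ℝ) ≤ (2 * (ℓ : ℝ)) ^ (Real.logb 2 3) := by
  have mono := monotoneOn_of_halving_rec hrec
  refine ⟨fun a b ha hab ↦ mono ha (le_trans ha hab) hab, fun ℓ hℓ ↦ ?_⟩
  set k := Nat.clog 2 ℓ
  have hup : ℓ ≤ 2 ^ k := Nat.le_pow_clog one_lt_two ℓ
  have hF : F ℓ ≤ 3 ^ k := by
    simpa [apply_two_pow_of_halving_rec hrec, h1] using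
      mono hℓ (le_trans hℓ hup) hup
  have h2k : (2 : ℝ) ^ k ≤ 2 * ℓ := by exact_mod_cast Nat.pow_clog_le_mul one_lt_two hℓ
  calc (F ℓ : ℝ) ≤ (3 : ℝ) ^ k := by exact_mod_cast hF
    _ = ((2 : ℝ) ^ k) ^ Real.logb 2 3 := Real.pow_eq_pow_rpow_logb two_pos (by norm_num) three_pos k
    _ ≤ (2 * (ℓ : ℝ)) ^ Real.logb 2 3 :=
        Real.rpow_le_rpow (by positivity) h2k (Real.logb_nonneg one_lt_two (by norm_num))
end

section
/- Let L ≥ 1 be an integer and let p be as in the explicit parallel-tempering construction. Then for every i ∈ {0,…,L}: p(i, i+1) > 1 − 1/(L+1), and for every k ∈ {1,…,m} with k ≠ i+1: 1/(2(L+1)³) < p(i,k) < 1/(L+1)². -/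
/-- The unnormalized weight `N(i,k) = γ^(2(i+1)k − k² + 1) + Σ_{r=0}^{L} γ^((2r+1)(i+1) − r² − r)`
with `γ = (L+1)³`, of the explicit parallel-tempering construction. -/
noncomputable def NPT (L i k : ℕ) : ℝ :=
  (((L : ℝ) + 1) ^ 3) ^ (2 * ((i : ℤ) + 1) * (k : ℤ) - (k : ℤ) ^ 2 + 1) +
    ∑ r ∈ Finset.range (L + 1),
      (((L : ℝ) + 1) ^ 3) ^ ((2 * (r : ℤ) + 1) * ((i : ℤ) + 1) - (r : ℤ) ^ 2 - (r : ℤ))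

/-- `p(i,k) = N(i,k) / Σ_{h=1}^{m} N(i,h)` with `m = L+1`: the probability vector of the
explicit parallel-tempering construction. -/
noncomputable def pPT (L i k : ℕ) : ℝ := NPT L i k / ∑ h ∈ Finset.Icc 1 (L + 1), NPT L i h

/-!
Write `γ = (L+1)³` and `x = γ^((i+1)²)`. Completing the square,
`2(i+1)k − k² + 1 = (i+1)² + 1 − (k − i − 1)²` and
`(2r+1)(i+1) − r² − r = (i+1)² − (r − i)(r − i + 1)`, so the leading term of `N(i, i+1)` is
`γx`, every other leading term is at most `x`, and the sum `S` common to all `N(i, k)` lies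
between `x` (its `r = i` term) and `(L+1)x`. The normalising sum is therefore at most
`γx + Lx + (L+1)²x`, and since `γ = (L+1)³` dominates `(L+1)²`, the weight `γx + S` of `k = i+1`
carries all but a `1/(L+1)` fraction of the mass, while every other weight lies between `x` and
`(L+2)x`.
-/

theorem two_mul_mul_sub_sq_add_one_le_sq {a k : ℤ} (hk : k ≠ a) :
    2 * a * k - k ^ 2 + 1 ≤ a ^ 2 := by
  have : 1 ≤ (k - a) ^ 2 := by
    rcases (sub_ne_zero.mpr hk).lt_or_gt with h | h <;> nlinarith
  nlinarith

theorem two_mul_add_one_mul_sub_sq_sub_le_sq (a r : ℤ) :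
    (2 * r + 1) * a - r ^ 2 - r ≤ a ^ 2 := by
  have : 0 ≤ (r - a) * (r - a + 1) := by
    rcases le_or_gt (r - a) (-1) with h | h <;> nlinarith
  nlinarith

namespace ParallelTempering

noncomputable def gamma (L : ℕ) : ℝ := ((L : ℝ) + 1) ^ 3

noncomputable def head (L i k : ℕ) : ℝ :=
  gamma L ^ (2 * ((i : ℤ) + 1) * (k : ℤ) - (k : ℤ) ^ 2 + 1)

noncomputable def tail (L i : ℕ) : ℝ :=
  ∑ r ∈ Finset.range (L + 1),
    gamma L ^ ((2 * (r : ℤ) + 1) * ((i : ℤ) + 1) - (r : ℤ) ^ 2 - (r : ℤ))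

noncomputable def peak (L i : ℕ) : ℝ := gamma L ^ (((i : ℤ) + 1) ^ 2)

theorem one_le_gamma (L : ℕ) : 1 ≤ gamma L := one_le_pow₀ (by simp)

theorem gamma_pos (L : ℕ) : 0 < gamma L := one_pos.trans_le (one_le_gamma L)

theorem peak_pos (L i : ℕ) : 0 < peak L i := zpow_pos (gamma_pos L) _

theorem head_pos (L i k : ℕ) : 0 < head L i k := zpow_pos (gamma_pos L) _

theorem tail_pos (L i : ℕ) : 0 < tail L i :=
  Finset.sum_pos (fun _ _ => zpow_pos (gamma_pos L) _) Finset.nonempty_range_add_one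

theorem head_succ_self (L i : ℕ) : head L i (i + 1) = gamma L * peak L i := by
  rw [head, peak, ← zpow_one_add₀ (gamma_pos L).ne']
  congr 1
  push_cast
  ring

theorem head_le_peak (L : ℕ) {i k : ℕ} (hk : k ≠ i + 1) : head L i k ≤ peak L i :=
  zpow_le_zpow_right₀ (one_le_gamma L) (two_mul_mul_sub_sq_add_one_le_sq (by exact_mod_cast hk))

theorem tail_le (L i : ℕ) : tail L i ≤ (L + 1) * peak L i := by
  calc tail L i ≤ ∑ _r ∈ Finset.range (L + 1), peak L i :=
        Finset.sum_le_sum fun _ _ =>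
          zpow_le_zpow_right₀ (one_le_gamma L) (two_mul_add_one_mul_sub_sq_sub_le_sq _ _)
    _ = (L + 1) * peak L i := by simp

theorem peak_le_tail {L i : ℕ} (hi : i ≤ L) : peak L i ≤ tail L i := by
  have hterm : peak L i =
      gamma L ^ ((2 * (i : ℤ) + 1) * ((i : ℤ) + 1) - (i : ℤ) ^ 2 - (i : ℤ)) := by
    rw [peak]
    ring_nf
  rw [hterm]
  exact Finset.single_le_sum
    (f := fun r : ℕ => gamma L ^ ((2 * (r : ℤ) + 1) * ((i : ℤ) + 1) - (r : ℤ) ^ 2 - (r : ℤ)))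
    (fun _ _ => (zpow_pos (gamma_pos L) _).le) (Finset.mem_range.mpr (by omega))

theorem sum_head_le {L i : ℕ} (hi : i ≤ L) :
    ∑ h ∈ Finset.Icc 1 (L + 1), head L i h ≤ gamma L * peak L i + L * peak L i := by
  have hmem : i + 1 ∈ Finset.Icc 1 (L + 1) := Finset.mem_Icc.mpr ⟨by omega, by omega⟩
  rw [← Finset.add_sum_erase _ _ hmem, head_succ_self]
  gcongr
  calc ∑ h ∈ (Finset.Icc 1 (L + 1)).erase (i + 1), head L i h
      ≤ ∑ _h ∈ (Finset.Icc 1 (L + 1)).erase (i + 1), peak L i :=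
        Finset.sum_le_sum fun _ hh => head_le_peak L (Finset.ne_of_mem_erase hh)
    _ = L * peak L i := by simp [Finset.card_erase_of_mem hmem]

theorem add_head_le_sum_head {L i k : ℕ} (hi : i ≤ L) (hk1 : 1 ≤ k) (hkL : k ≤ L + 1)
    (hk : k ≠ i + 1) :
    gamma L * peak L i + head L i k ≤ ∑ h ∈ Finset.Icc 1 (L + 1), head L i h := by
  rw [← head_succ_self, ← Finset.sum_pair hk.symm]
  refine Finset.sum_le_sum_of_subset_of_nonneg ?_ fun h _ _ => (head_pos L i h).le
  intro h hh
  simp only [Finset.mem_insert, Finset.mem_singleton] at hh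
  rcases hh with rfl | rfl <;> simp <;> omega

end ParallelTempering

open ParallelTempering

theorem NPT_eq_head_add_tail (L i k : ℕ) : NPT L i k = head L i k + tail L i := rfl

theorem sum_Icc_NPT (L i : ℕ) :
    ∑ h ∈ Finset.Icc 1 (L + 1), NPT L i h =
      ∑ h ∈ Finset.Icc 1 (L + 1), head L i h + (L + 1) * tail L i := by
  simp [NPT_eq_head_add_tail, Finset.sum_add_distrib]

theorem sum_Icc_NPT_pos (L i : ℕ) : 0 < ∑ h ∈ Finset.Icc 1 (L + 1), NPT L i h := by
  rw [sum_Icc_NPT]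
  exact add_pos_of_nonneg_of_pos (Finset.sum_nonneg fun h _ => (head_pos L i h).le)
    (mul_pos (by positivity) (tail_pos L i))

theorem one_sub_inv_lt_pPT_succ_self {L i : ℕ} (hi : i ≤ L) :
    1 - 1 / ((L : ℝ) + 1) < pPT L i (i + 1) := by
  have hE := sum_head_le hi
  rw [gamma] at hE
  rw [pPT, one_sub_div (by positivity), div_lt_div_iff₀ (by positivity) (sum_Icc_NPT_pos L i),
    sum_Icc_NPT, NPT_eq_head_add_tail, head_succ_self, gamma]
  have hL : (0 : ℝ) ≤ L := by positivity
  -- with `c = L+1`, the margin is at least `(c³ − Lc² − L²) x + c S = (2L+1) x + c S`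
  nlinarith [mul_le_mul_of_nonneg_left (tail_le L i) (by positivity : (0 : ℝ) ≤ L * (L + 1)),
    mul_le_mul_of_nonneg_left hE hL, mul_nonneg hL (tail_pos L i).le,
    mul_nonneg hL (peak_pos L i).le, tail_pos L i, peak_pos L i]

theorem inv_lt_pPT {L i : ℕ} (hi : i ≤ L) (k : ℕ) :
    1 / (2 * ((L : ℝ) + 1) ^ 3) < pPT L i k := by
  have hE := sum_head_le hi
  rw [gamma] at hE
  rw [pPT, div_lt_div_iff₀ (by positivity) (sum_Icc_NPT_pos L i), sum_Icc_NPT,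
    NPT_eq_head_add_tail, one_mul]
  have hL : (0 : ℝ) ≤ L := by positivity
  have hγ : L + (L + 1) ≤ ((L : ℝ) + 1) ^ 3 := by nlinarith [pow_nonneg hL 3, sq_nonneg (L : ℝ)]
  -- `Σ head + (L+1) S ≤ (γ + L) x + (L+1) S ≤ (γ + 2L + 1) S ≤ 2γ S`
  nlinarith [mul_le_mul_of_nonneg_left (peak_le_tail hi)
      (by positivity : (0 : ℝ) ≤ (L + 1) ^ 3 + L),
    mul_le_mul_of_nonneg_right hγ (tail_pos L i).le,
    mul_pos (by positivity : (0 : ℝ) < 2 * (L + 1) ^ 3) (head_pos L i k)]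

theorem pPT_lt_inv_sq {L i k : ℕ} (hi : i ≤ L) (hk1 : 1 ≤ k) (hkL : k ≤ L + 1)
    (hk : k ≠ i + 1) : pPT L i k < 1 / ((L : ℝ) + 1) ^ 2 := by
  have hE := add_head_le_sum_head hi hk1 hkL hk
  rw [gamma] at hE
  rw [pPT, div_lt_div_iff₀ (sum_Icc_NPT_pos L i) (by positivity), sum_Icc_NPT,
    NPT_eq_head_add_tail, one_mul]
  -- with `c = L+1`: `(c² − 1) head k + (c² − c) S ≤ (c³ − 1) x < γ x`
  nlinarith [peak_pos L i,
    mul_le_mul_of_nonneg_left (tail_le L i) (by positivity : (0 : ℝ) ≤ L * (L + 1)),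
    mul_le_mul_of_nonneg_left (head_le_peak L hk) (by positivity : (0 : ℝ) ≤ L * (L + 2))]

theorem stmt_10_general (L : ℕ) (i : ℕ) (hi : i ≤ L) :
    pPT L i (i + 1) > 1 - 1 / ((L : ℝ) + 1) ∧
    ∀ k : ℕ, 1 ≤ k → k ≤ L + 1 → k ≠ i + 1 →
      1 / (2 * ((L : ℝ) + 1) ^ 3) < pPT L i k ∧ pPT L i k < 1 / ((L : ℝ) + 1) ^ 2 :=
  ⟨one_sub_inv_lt_pPT_succ_self hi,
    fun k hk1 hkL hk => ⟨inv_lt_pPT hi k, pPT_lt_inv_sq hi hk1 hkL hk⟩⟩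

/-- `p(i, i+1) > 1 − 1/(L+1)`, and for `k ≠ i+1`,
`1/(2(L+1)³) < p(i,k) < 1/(L+1)²`. -/
theorem stmt_10 (L : ℕ) (hL : 1 ≤ L) (i : ℕ) (hi : i ≤ L) :
    pPT L i (i + 1) > 1 - 1 / ((L : ℝ) + 1) ∧
    ∀ k : ℕ, 1 ≤ k → k ≤ L + 1 → k ≠ i + 1 →
      1 / (2 * ((L : ℝ) + 1) ^ 3) < pPT L i k ∧ pPT L i k < 1 / ((L : ℝ) + 1) ^ 2 :=
  stmt_10_general L i hi
end

section
/- Let L ≥ 1 be an integer and let p be as in the explicit parallel-tempering construction. Then for every i ∈ {1,…,L} and k ∈ {1,…,m}: (a) if k ∉ {i, i+1, i+2} then p(i−1,k)/p(i,k) > 1 − 1/(L+1); (b) if k = i then p(i−1,k)/p(i,k) > 1; (c) if k = i+1 then p(i−1,k)/p(i,k) > 1/(2(L+1)³); (d) if k = i+2 (and i+2 ≤ m) then p(i−1,k)/p(i,k) > (2/3)(1 − 1/(L+1)). -/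
open Finset

lemma Finset.sum_le_sum_add_card_nsmul {ι M : Type*} [DecidableEq ι] [AddCommMonoid M]
    [PartialOrder M] [IsOrderedAddMonoid M] {s t : Finset ι} {f : ι → M} {c : M}
    (hf : ∀ x ∈ t, 0 ≤ f x) (hc : 0 ≤ c) (hfc : ∀ x ∈ s, x ∉ t → f x ≤ c) :
    ∑ x ∈ s, f x ≤ ∑ x ∈ t, f x + #s • c := by
  rw [← sum_filter_add_sum_filter_not s (· ∈ t)]
  refine add_le_add ?_ ?_
  · exact sum_le_sum_of_subset_of_nonneg (fun x hx => (mem_filter.1 hx).2)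
      (fun x hx _ => hf x hx)
  · calc ∑ x ∈ s with x ∉ t, f x ≤ #{x ∈ s | x ∉ t} • c :=
          sum_le_card_nsmul _ _ c fun x hx => hfc x (mem_filter.1 hx).1 (mem_filter.1 hx).2
      _ ≤ #s • c := nsmul_le_nsmul_left hc (card_le_card (filter_subset _ _))

noncomputable def gammaPT (L : ℕ) : ℝ := ((L : ℝ) + 1) ^ 3

noncomputable def peakPT (L a k : ℕ) : ℝ := gammaPT L ^ (1 - ((k : ℤ) - a - 1) ^ 2)

noncomputable def sigmaPT (L a : ℕ) : ℝ :=
  ∑ r ∈ range (L + 1), gammaPT L ^ (-(((r : ℤ) - a - 1) * ((r : ℤ) - a)))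

noncomputable def wPT (L a k : ℕ) : ℝ := peakPT L a k + sigmaPT L a

noncomputable def zPT (L a : ℕ) : ℝ := ∑ h ∈ Icc 1 (L + 1), wPT L a h

section

variable {L a k : ℕ}

lemma one_le_gammaPT (L : ℕ) : 1 ≤ gammaPT L :=
  one_le_pow₀ (le_add_of_nonneg_left L.cast_nonneg)

lemma gammaPT_pos (L : ℕ) : 0 < gammaPT L := zero_lt_one.trans_le (one_le_gammaPT L)

lemma natCast_add_one_le_gammaPT (L : ℕ) : (L : ℝ) + 1 ≤ gammaPT L :=
  le_self_pow₀ (le_add_of_nonneg_left L.cast_nonneg) three_ne_zero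

lemma zpow_gammaPT_le_inv {e : ℤ} (he : e ≤ -1) : gammaPT L ^ e ≤ (gammaPT L)⁻¹ := by
  simpa using zpow_le_zpow_right₀ (one_le_gammaPT L) he

lemma NPT_eq_mul_wPT (L a k : ℕ) : NPT L a k = gammaPT L ^ (((a : ℤ) + 1) ^ 2) * wPT L a k := by
  have hγ : gammaPT L ≠ 0 := (gammaPT_pos L).ne'
  simp only [wPT, peakPT, sigmaPT, mul_add, mul_sum, ← zpow_add₀ hγ]
  refine congrArg₂ (· + ·) (congrArg _ (by ring)) (sum_congr rfl fun r _ => congrArg _ (by ring))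

lemma peakPT_pos : 0 < peakPT L a k := zpow_pos (gammaPT_pos L) _

lemma peakPT_succ : peakPT L a (a + 1) = gammaPT L := by simp [peakPT]

lemma peakPT_eq_one (hk : k = a ∨ k = a + 2) : peakPT L a k = 1 := by
  rcases hk with rfl | rfl <;> simp [peakPT]

lemma peakPT_le_inv (h₀ : k ≠ a) (h₁ : k ≠ a + 1) (h₂ : k ≠ a + 2) :
    peakPT L a k ≤ (gammaPT L)⁻¹ := by
  refine zpow_gammaPT_le_inv ?_
  rcases (by omega : (k : ℤ) - a - 1 ≤ -2 ∨ 2 ≤ (k : ℤ) - a - 1) with h | h <;> nlinarith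

lemma sigmaPT_nonneg : 0 ≤ sigmaPT L a :=
  sum_nonneg fun _ _ => (zpow_pos (gammaPT_pos L) _).le

lemma sum_pair_sigmaPT_terms (L a : ℕ) :
    ∑ r ∈ {a, a + 1}, gammaPT L ^ (-(((r : ℤ) - a - 1) * ((r : ℤ) - a))) = 2 := by
  rw [sum_pair (by omega)]
  push_cast
  ring_nf
  norm_num

lemma two_le_sigmaPT (ha : a + 1 ≤ L) : 2 ≤ sigmaPT L a := by
  rw [← sum_pair_sigmaPT_terms L a]
  refine sum_le_sum_of_subset_of_nonneg (fun r hr => ?_)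
    fun _ _ _ => (zpow_pos (gammaPT_pos L) _).le
  rw [mem_insert, mem_singleton] at hr
  rw [mem_range]
  omega

lemma sigmaPT_le : sigmaPT L a ≤ 2 + (gammaPT L)⁻¹ := by
  have hγ := gammaPT_pos L
  have key := sum_le_sum_add_card_nsmul (s := range (L + 1)) (t := {a, a + 1})
    (f := fun r : ℕ => gammaPT L ^ (-(((r : ℤ) - a - 1) * ((r : ℤ) - a))))
    (c := gammaPT L ^ (-2 : ℤ)) (fun _ _ => (zpow_pos hγ _).le) (zpow_pos hγ _).le
    fun r _ hr => zpow_le_zpow_right₀ (one_le_gammaPT L) (by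
      rw [mem_insert, mem_singleton] at hr
      rcases (by omega : (r : ℤ) - a - 1 ≤ -2 ∨ 1 ≤ (r : ℤ) - a - 1) with h | h <;> nlinarith)
  rw [sum_pair_sigmaPT_terms, card_range, nsmul_eq_mul, zpow_neg, zpow_ofNat] at key
  calc sigmaPT L a ≤ 2 + ((L + 1 : ℕ) : ℝ) * (gammaPT L ^ 2)⁻¹ := key
    _ ≤ 2 + gammaPT L * (gammaPT L ^ 2)⁻¹ := by
        gcongr; push_cast; exact natCast_add_one_le_gammaPT L
    _ = 2 + (gammaPT L)⁻¹ := by field_simp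

lemma wPT_pos : 0 < wPT L a k := add_pos_of_pos_of_nonneg peakPT_pos sigmaPT_nonneg

lemma two_le_wPT (ha : a + 1 ≤ L) : 2 ≤ wPT L a k :=
  le_add_of_nonneg_of_le peakPT_pos.le (two_le_sigmaPT ha)

lemma wPT_le_of_peakPT_le {x : ℝ} (hx : peakPT L a k ≤ x) :
    wPT L a k ≤ x + (2 + (gammaPT L)⁻¹) :=
  add_le_add hx sigmaPT_le

lemma gammaPT_le_wPT_succ : gammaPT L ≤ wPT L a (a + 1) :=
  peakPT_succ.symm.trans_le (le_add_of_nonneg_right sigmaPT_nonneg)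

lemma three_le_wPT_add_two (ha : a + 1 ≤ L) : 3 ≤ wPT L a (a + 2) := by
  rw [wPT, peakPT_eq_one (.inr rfl)]
  linarith [two_le_sigmaPT ha]

lemma gammaPT_le_zPT (ha : a ≤ L) : gammaPT L ≤ zPT L a :=
  gammaPT_le_wPT_succ.trans <|
    single_le_sum (f := wPT L a) (fun _ _ => wPT_pos.le) (mem_Icc.2 ⟨by omega, by omega⟩)

lemma zPT_pos : 0 < zPT L a := sum_pos (fun _ _ => wPT_pos) ⟨1, by simp⟩

lemma zPT_le : zPT L a ≤ gammaPT L + 2 * ((L : ℝ) + 1) + 4 := by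
  have hγ := gammaPT_pos L
  have hpeak := sum_le_sum_add_card_nsmul (s := Icc 1 (L + 1)) (t := {a, a + 1, a + 2})
    (f := peakPT L a) (c := (gammaPT L)⁻¹) (fun _ _ => peakPT_pos.le) (inv_pos.2 hγ).le
    fun k _ hk => by
      simp only [mem_insert, mem_singleton, not_or] at hk
      exact peakPT_le_inv hk.1 hk.2.1 hk.2.2
  rw [sum_insert (by simp), sum_pair (by omega), peakPT_eq_one (.inl rfl), peakPT_succ,
    peakPT_eq_one (.inr rfl), Nat.card_Icc, Nat.add_sub_cancel, nsmul_eq_mul] at hpeak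
  have hn : ((L : ℝ) + 1) * (gammaPT L)⁻¹ ≤ 1 := by
    rw [← div_eq_mul_inv, div_le_one hγ]; exact natCast_add_one_le_gammaPT L
  have hσ : ((L : ℝ) + 1) * sigmaPT L a ≤ ((L : ℝ) + 1) * (2 + (gammaPT L)⁻¹) :=
    mul_le_mul_of_nonneg_left sigmaPT_le (by positivity)
  simp only [zPT, wPT, sum_add_distrib, sum_const, Nat.card_Icc, Nat.add_sub_cancel, nsmul_eq_mul]
  push_cast at hpeak ⊢
  nlinarith

lemma pPT_eq_wPT_div_zPT : pPT L a k = wPT L a k / zPT L a := by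
  simp only [pPT, zPT, NPT_eq_mul_wPT, ← mul_sum]
  exact mul_div_mul_left _ _ (zpow_pos (gammaPT_pos L) _).ne'

lemma lt_pPT_div_pPT_succ {j : ℕ} (hj : j + 1 ≤ L) {α x c : ℝ} (hα : 0 ≤ α)
    (hw : α ≤ wPT L j k) (hx : peakPT L (j + 1) k ≤ x)
    (hc : c < α * gammaPT L /
      ((x + (2 + (gammaPT L)⁻¹)) * (gammaPT L + 2 * ((L : ℝ) + 1) + 4))) :
    c < pPT L j k / pPT L (j + 1) k := by
  rw [pPT_eq_wPT_div_zPT, pPT_eq_wPT_div_zPT, div_div_div_eq, mul_comm (zPT L j)]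
  have hw' := wPT_le_of_peakPT_le hx
  exact hc.trans_le <| div_le_div₀ (mul_pos wPT_pos zPT_pos).le
    (mul_le_mul hw (gammaPT_le_zPT hj) (gammaPT_pos L).le (hα.trans hw))
    (mul_pos wPT_pos zPT_pos) (mul_le_mul hw' zPT_le zPT_pos.le (wPT_pos.le.trans hw'))

end

lemma pow_three_add_two_mul_add_four_le {n : ℝ} (hn : 2 ≤ n) :
    n ^ 3 + 2 * n + 4 ≤ 2 * n ^ 3 := by
  nlinarith [mul_le_mul_of_nonneg_left (show 4 ≤ n ^ 2 by nlinarith) (by linarith : (0 : ℝ) ≤ n)]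

lemma ratioBound_far {n : ℝ} (hn : 3 ≤ n) :
    1 - 1 / n < 2 * n ^ 3 / (((n ^ 3)⁻¹ + (2 + (n ^ 3)⁻¹)) * (n ^ 3 + 2 * n + 4)) := by
  have h0 : 0 < n := by linarith
  rw [lt_div_iff₀ (by positivity)]
  field_simp
  nlinarith [mul_nonneg (pow_nonneg h0.le 4) (mul_nonneg (sub_nonneg.2 hn) h0.le),
    pow_pos h0 3, pow_pos h0 2]

lemma ratioBound_self {n : ℝ} (hn : 2 ≤ n) :
    1 < n ^ 3 * n ^ 3 / ((1 + (2 + (n ^ 3)⁻¹)) * (n ^ 3 + 2 * n + 4)) := by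
  have hg : 8 ≤ n ^ 3 := by nlinarith [pow_le_pow_left₀ (by norm_num) hn 3]
  have hβ := pow_three_add_two_mul_add_four_le hn
  generalize n ^ 3 = g at *
  rw [lt_div_iff₀ (by positivity)]
  field_simp
  nlinarith [mul_le_mul_of_nonneg_left hβ (by linarith : 0 ≤ 3 * g + 1),
    mul_le_mul_of_nonneg_right hg (sq_nonneg g)]

lemma ratioBound_succ {n : ℝ} (hn : 2 ≤ n) :
    1 / (2 * n ^ 3) < 3 * n ^ 3 / ((n ^ 3 + (2 + (n ^ 3)⁻¹)) * (n ^ 3 + 2 * n + 4)) := by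
  have hg : 8 ≤ n ^ 3 := by nlinarith [pow_le_pow_left₀ (by norm_num) hn 3]
  have hβ := pow_three_add_two_mul_add_four_le hn
  generalize n ^ 3 = g at *
  rw [lt_div_iff₀ (by positivity)]
  field_simp
  nlinarith [mul_le_mul_of_nonneg_left hβ (by positivity : 0 ≤ (g + 1) ^ 2),
    mul_le_mul_of_nonneg_right hg (sq_nonneg g)]

lemma ratioBound_succ_succ {n : ℝ} (hn : 3 ≤ n) :
    2 / 3 * (1 - 1 / n) < 2 * n ^ 3 / ((1 + (2 + (n ^ 3)⁻¹)) * (n ^ 3 + 2 * n + 4)) := by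
  have h0 : 0 < n := by linarith
  rw [lt_div_iff₀ (by positivity)]
  field_simp
  nlinarith [mul_nonneg (pow_nonneg h0.le 4) (mul_nonneg (sub_nonneg.2 hn) h0.le),
    pow_pos h0 3, pow_pos h0 2]

theorem stmt_11_general (L : ℕ) (i : ℕ) (hi1 : 1 ≤ i) (hiL : i ≤ L)
    (k : ℕ) (hk1 : 1 ≤ k) (hkm : k ≤ L + 1) :
    (k ≠ i ∧ k ≠ i + 1 ∧ k ≠ i + 2 →
      pPT L (i - 1) k / pPT L i k > 1 - 1 / ((L : ℝ) + 1)) ∧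
    (k = i → pPT L (i - 1) k / pPT L i k > 1) ∧
    (k = i + 1 → pPT L (i - 1) k / pPT L i k > 1 / (2 * ((L : ℝ) + 1) ^ 3)) ∧
    (k = i + 2 → pPT L (i - 1) k / pPT L i k > 2 / 3 * (1 - 1 / ((L : ℝ) + 1))) := by
  obtain ⟨j, rfl⟩ : ∃ j, i = j + 1 := ⟨i - 1, by omega⟩
  rw [Nat.add_sub_cancel]
  have hn2 : (2 : ℝ) ≤ (L : ℝ) + 1 := by norm_cast; omega
  refine ⟨fun ⟨h₀, h₁, h₂⟩ => ?_, fun hk => ?_, fun hk => ?_, fun hk => ?_⟩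
  · have hn3 : (3 : ℝ) ≤ (L : ℝ) + 1 := by norm_cast; omega
    exact lt_pPT_div_pPT_succ hiL zero_le_two (two_le_wPT hiL) (peakPT_le_inv h₀ h₁ h₂)
      (ratioBound_far hn3)
  · subst hk
    exact lt_pPT_div_pPT_succ hiL (gammaPT_pos L).le gammaPT_le_wPT_succ
      (peakPT_eq_one (.inl rfl)).le (ratioBound_self hn2)
  · subst hk
    exact lt_pPT_div_pPT_succ hiL zero_le_three (three_le_wPT_add_two hiL) peakPT_succ.le
      (ratioBound_succ hn2)
  · subst hk
    have hn3 : (3 : ℝ) ≤ (L : ℝ) + 1 := by norm_cast; omega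
    exact lt_pPT_div_pPT_succ hiL zero_le_two (two_le_wPT hiL) (peakPT_eq_one (.inr rfl)).le
      (ratioBound_succ_succ hn3)

/-- bounds on the ratios `p(i−1,k)/p(i,k)` for `i ∈ {1,…,L}`:
(a) if `k ∉ {i, i+1, i+2}` then the ratio is `> 1 − 1/(L+1)`; (b) if `k = i` it is `> 1`;
(c) if `k = i+1` it is `> 1/(2(L+1)³)`; (d) if `k = i+2` it is `> (2/3)(1 − 1/(L+1))`. -/
theorem stmt_11 (L : ℕ) (hL : 1 ≤ L) (i : ℕ) (hi1 : 1 ≤ i) (hiL : i ≤ L)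
    (k : ℕ) (hk1 : 1 ≤ k) (hkm : k ≤ L + 1) :
    (k ≠ i ∧ k ≠ i + 1 ∧ k ≠ i + 2 →
      pPT L (i - 1) k / pPT L i k > 1 - 1 / ((L : ℝ) + 1)) ∧
    (k = i → pPT L (i - 1) k / pPT L i k > 1) ∧
    (k = i + 1 → pPT L (i - 1) k / pPT L i k > 1 / (2 * ((L : ℝ) + 1) ^ 3)) ∧
    (k = i + 2 → pPT L (i - 1) k / pPT L i k > 2 / 3 * (1 - 1 / ((L : ℝ) + 1))) :=
  stmt_11_general L i hi1 hiL k hk1 hkm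
end

section
/- There is an absolute constant C > 0 with the following property. Let L ≥ 1 and m ≥ 2 be integers, let p : {0,…,L} × {1,…,m} → (0,1] satisfy Σ_{k=1}^{m} p(i,k) = 1 for each i, define π̄(λ) = Π_{i=0}^{L} p(i, λ_i) for λ ∈ {1,…,m}^{L+1}, and set B = min over k ∈ {1,…,m} of Π_{i=1}^{L} min{1, p(i−1,k)/p(i,k)}. Let φ ∈ (0,1], and let Q be any transition matrix on {1,…,m}^{L+1} (nonnegative entries, rows summing to 1) that is reversible with respect to π̄ and satisfies Q(τ, (i−1 i)τ) ≥ φ²/(2L) for every state τ and every i ∈ {1,…,L}, where (i−1 i)τ denotes τ with coordinates i−1 and i exchanged. Define the transition matrix P₁ by P₁ = (1/2)Q + (1/(2(L+1)))R₀ + (1/2 − 1/(2(L+1)))I, where R₀(τ, τ') = p(0,k) if τ' = τ_{[0,k]} for some k (and 0 if τ' differs from τ in a coordinate other than 0), and I is the identity; and define the transition matrix P₂ by P₂(τ, τ_{[i,k]}) = (1/(L+1)) p(i,k) for each i ∈ {0,…,L} and k ∈ {1,…,m} (with the diagonal entry collecting the total mass of proposals that keep the state unchanged). Here τ_{[i,k]}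 denotes τ with coordinate i replaced by k. Then both P₁ and P₂ are reversible with respect to π̄, and for every f : {1,…,m}^{L+1} → ℝ, E_{P₂}(f) ≤ C · m³ · (L+1)^{1 + 2log₂3} · φ^{−2} · B^{−C(1 + log₂(L+1))} · E_{P₁}(f), where E_P(f) = (1/2) Σ_{τ,τ'} π̄(τ)P(τ,τ')(f(τ) − f(τ'))². -/
/-!
A resampling move at level `i` is routed through level `0`: resample at `0`, swap the levels
`0` and `i`, resample at `0` again. Writing `W_i` for the energy of resampling at level `i` and
`Y(x, y)` for the energy of the swap `(x y)` under `π̄` with coordinate `x` drawn at level `y`, this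
gives `B W_i ≤ 6 W_0 + 3 B Y(0, i)`. A long swap `(x z)` is the conjugate `(x y)(y z)(x y)` of swaps
of half its length, whence `B Y(x, z) ≤ 6 Y(x, y) + 3 Y(y, z)`; after `log₂ L + 1` halvings only
adjacent swaps remain, and `Q` proposes each of them with probability at least `φ² / (2L)`. Every
reroute costs one factor `B`, because raising the level of one coordinate from `x` to `y ≥ x`
lowers its weight by at most the telescoping product that defines `B`. Altogether
`B ^ (log₂ L + 2) W_i ≲ W_0 + 9 ^ (log₂ L) L φ⁻² E_Q` with `9 ^ (log₂ L) ≤ (L + 1) ^ (2 log₂ 3)`,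
while `E_{P₂} = Σ_i W_i / (2 (L + 1))` and `E_{P₁} = E_Q / 2 + W_0 / (4 (L + 1))`.
-/

open Finset Equiv Real

namespace ParallelTempering

section Reversible

variable {α : Type*} {μ : α → ℝ} {P P' : α → α → ℝ}

def IsReversible (μ : α → ℝ) (P : α → α → ℝ) : Prop :=
  ∀ x y, μ x * P x y = μ y * P y x

lemma IsReversible.add (h : IsReversible μ P) (h' : IsReversible μ P') :
    IsReversible μ (fun x y => P x y + P' x y) := fun x y => by
  rw [mul_add, mul_add, h x y, h' x y]

lemma IsReversible.const_mul (h : IsReversible μ P) (a : ℝ) :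
    IsReversible μ (fun x y => a * P x y) := fun x y => by
  rw [mul_left_comm, h x y, mul_left_comm]

lemma IsReversible.sum {ι : Type*} (s : Finset ι) {P : ι → α → α → ℝ}
    (h : ∀ i ∈ s, IsReversible μ (P i)) : IsReversible μ (fun x y => ∑ i ∈ s, P i x y) :=
  fun x y => by
    rw [mul_sum, mul_sum]
    exact sum_congr rfl fun i hi => h i hi x y

lemma isReversible_diag [DecidableEq α] (a : ℝ) :
    IsReversible μ (fun x y => if y = x then a else 0) := fun x y => by
  by_cases h : y = x
  · subst h; rfl
  · simp [h, Ne.symm h]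

end Reversible

section Dirichlet

variable {α : Type*} [Fintype α] {μ : α → ℝ} {P P' : α → α → ℝ}

noncomputable def dirichletForm (μ : α → ℝ) (P : α → α → ℝ) (f : α → ℝ) : ℝ :=
  1 / 2 * ∑ x, ∑ y, μ x * P x y * (f x - f y) ^ 2

lemma dirichletForm_add (f : α → ℝ) :
    dirichletForm μ (fun x y => P x y + P' x y) f = dirichletForm μ P f + dirichletForm μ P' f := by
  simp only [dirichletForm, mul_add, add_mul, sum_add_distrib]

lemma dirichletForm_const_mul (a : ℝ) (f : α → ℝ) :
    dirichletForm μ (fun x y => a * P x y) f = a * dirichletForm μ P f := by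
  simp only [dirichletForm, mul_sum]
  congr 1; ext x; congr 1; ext y; ring

lemma dirichletForm_sum {ι : Type*} (s : Finset ι) (P : ι → α → α → ℝ) (f : α → ℝ) :
    dirichletForm μ (fun x y => ∑ i ∈ s, P i x y) f = ∑ i ∈ s, dirichletForm μ (P i) f := by
  simp only [dirichletForm, mul_sum, sum_mul]
  symm
  rw [Finset.sum_comm]
  exact sum_congr rfl fun x _ => Finset.sum_comm

lemma dirichletForm_diag [DecidableEq α] (a : ℝ) (f : α → ℝ) :
    dirichletForm μ (fun x y => if y = x then a else 0) f = 0 := by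
  simp [dirichletForm]

lemma dirichletForm_nonneg (hμ : ∀ x, 0 ≤ μ x) (hP : ∀ x y, 0 ≤ P x y) (f : α → ℝ) :
    0 ≤ dirichletForm μ P f :=
  mul_nonneg (by norm_num) <| sum_nonneg fun x _ => sum_nonneg fun y _ =>
    mul_nonneg (mul_nonneg (hμ x) (hP x y)) (sq_nonneg _)

lemma mul_sum_sq_le_dirichletForm (hμ : ∀ x, 0 ≤ μ x) (hP : ∀ x y, 0 ≤ P x y) {ε : ℝ}
    {g : α → α} (hg : ∀ x, ε ≤ P x (g x)) (f : α → ℝ) :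
    ε * ∑ x, μ x * (f x - f (g x)) ^ 2 ≤ 2 * dirichletForm μ P f := by
  rw [dirichletForm, ← mul_assoc, mul_one_div_cancel two_ne_zero, one_mul, mul_sum]
  refine sum_le_sum fun x _ => ?_
  calc ε * (μ x * (f x - f (g x)) ^ 2) ≤ μ x * P x (g x) * (f x - f (g x)) ^ 2 := by
        have := mul_le_mul_of_nonneg_right (hg x) (mul_nonneg (hμ x) (sq_nonneg (f x - f (g x))))
        linarith
    _ ≤ _ := single_le_sum (f := fun y => μ x * P x y * (f x - f y) ^ 2)
        (fun y _ => mul_nonneg (mul_nonneg (hμ x) (hP x y)) (sq_nonneg _)) (mem_univ _)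

end Dirichlet

section PathForm

variable {ι Λ κ : Type*} [Fintype ι] {p : Λ → κ → ℝ}

variable (p) in
def levelWeight (r : ι → Λ) (c : ι → κ) : ℝ := ∏ j, p (r j) (c j)

lemma levelWeight_nonneg (hp : ∀ l k, 0 ≤ p l k) (r : ι → Λ) (c : ι → κ) :
    0 ≤ levelWeight p r c :=
  prod_nonneg fun _ _ => hp _ _

lemma levelWeight_comp_perm (r : ι → Λ) (c : ι → κ) (e : Perm ι) :
    levelWeight p r (c ∘ e) = levelWeight p (r ∘ e.symm) c := by
  unfold levelWeight
  exact (Equiv.prod_comp e.symm _).symm.trans (by simp)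

variable [DecidableEq ι]

lemma mul_levelWeight_le (hp : ∀ l k, 0 ≤ p l k) {B : ℝ} {r₁ r₂ : ι → Λ} (j : ι)
    (hr : ∀ i ≠ j, r₁ i = r₂ i) (hB : ∀ k, B * p (r₁ j) k ≤ p (r₂ j) k) (c : ι → κ) :
    B * levelWeight p r₁ c ≤ levelWeight p r₂ c := by
  unfold levelWeight
  rw [← mul_prod_erase _ _ (mem_univ j), ← mul_prod_erase _ _ (mem_univ j), ← mul_assoc,
    prod_congr rfl fun i hi => by rw [hr i (ne_of_mem_erase hi)]]
  exact mul_le_mul_of_nonneg_right (hB _) (prod_nonneg fun i _ => hp _ _)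

variable [Fintype κ] (F : (ι → κ) → ℝ)

variable (p) in
def pathForm (r : ι → Λ) (g h : Perm ι) : ℝ :=
  ∑ c, levelWeight p r c * (F (c ∘ g) - F (c ∘ h)) ^ 2

lemma pathForm_nonneg (hp : ∀ l k, 0 ≤ p l k) (r : ι → Λ) (g h : Perm ι) :
    0 ≤ pathForm p F r g h :=
  sum_nonneg fun c _ => mul_nonneg (levelWeight_nonneg hp r c) (sq_nonneg _)

lemma mul_pathForm_le (hp : ∀ l k, 0 ≤ p l k) {B : ℝ} {r₁ r₂ : ι → Λ} (j : ι)
    (hr : ∀ i ≠ j, r₁ i = r₂ i) (hB : ∀ k, B * p (r₁ j) k ≤ p (r₂ j) k) (g h : Perm ι) :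
    B * pathForm p F r₁ g h ≤ pathForm p F r₂ g h := by
  unfold pathForm
  rw [mul_sum]
  refine sum_le_sum fun c _ => ?_
  rw [← mul_assoc]
  exact mul_le_mul_of_nonneg_right (mul_levelWeight_le hp j hr hB c) (sq_nonneg _)

lemma pathForm_reindex (r : ι → Λ) (g h e : Perm ι) :
    pathForm p F r g h = pathForm p F (r ∘ e.symm) (e * g) (e * h) := by
  refine Fintype.sum_equiv (e.arrowCongr (Equiv.refl κ)) _ _ fun c => ?_
  have hc : (e.arrowCongr (Equiv.refl κ) c : ι → κ) = c ∘ e.symm := rfl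
  have hcomp (k : Perm ι) : (c ∘ e.symm) ∘ ⇑(e * k) = c ∘ k := by ext; simp
  rw [hc, levelWeight_comp_perm, hcomp, hcomp, symm_symm, Function.comp_assoc, symm_comp_self,
    Function.comp_id]

lemma pathForm_le_three (hp : ∀ l k, 0 ≤ p l k) (r : ι → Λ) (g a b h : Perm ι) :
    pathForm p F r g h ≤
      3 * (pathForm p F r g a + pathForm p F r a b + pathForm p F r b h) := by
  unfold pathForm
  simp only [← sum_add_distrib, mul_sum]
  refine sum_le_sum fun c _ => ?_
  have hsq (u v w z : ℝ) : (u - z) ^ 2 ≤ 3 * ((u - v) ^ 2 + (v - w) ^ 2 + (w - z) ^ 2) := by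
    nlinarith [sq_nonneg (u - 2 * v + w), sq_nonneg (v - 2 * w + z), sq_nonneg (u - v - w + z)]
  calc _ ≤ levelWeight p r c * (3 * ((F (c ∘ g) - F (c ∘ a)) ^ 2 +
          (F (c ∘ a) - F (c ∘ b)) ^ 2 + (F (c ∘ b) - F (c ∘ h)) ^ 2)) :=
        mul_le_mul_of_nonneg_left (hsq _ _ _ _) (levelWeight_nonneg hp r c)
    _ = _ := by ring

/- The canonical path `c, c ∘ (a b), c ∘ (a b) (b d), c ∘ (a b) (b d) (a b) = c ∘ (a d)`, with its
second and third legs reindexed to start at `c`. -/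
lemma pathForm_swap_le (hp : ∀ l k, 0 ≤ p l k) (r : ι → Λ) {a b d : ι}
    (hbd : b ≠ d) (had : a ≠ d) :
    pathForm p F r 1 (swap a d) ≤
      3 * (pathForm p F r 1 (swap a b) + pathForm p F (r ∘ swap a b) 1 (swap b d) +
        pathForm p F (r ∘ swap a b ∘ swap b d) 1 (swap a b)) := by
  have hconj : swap a b * swap b d * swap a b = swap a d := by
    rw [swap_comm a b, swap_comm b d, swap_mul_swap_mul_swap hbd.symm had.symm]
  have leg₂ : pathForm p F r (swap a b) (swap a b * swap b d) =
      pathForm p F (r ∘ swap a b) 1 (swap b d) := by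
    rw [pathForm_reindex F r _ _ (swap a b), swap_mul_self, swap_mul_self_mul, symm_swap]
  have leg₃ : pathForm p F r (swap a b * swap b d) (swap a d) =
      pathForm p F (r ∘ swap a b ∘ swap b d) 1 (swap a b) := by
    rw [pathForm_reindex F r _ _ (swap b d * swap a b), ← hconj]
    simp only [mul_assoc, swap_mul_self_mul, swap_mul_self]
    rfl
  calc _ ≤ 3 * (pathForm p F r 1 (swap a b) + pathForm p F r (swap a b) (swap a b * swap b d) +
        pathForm p F r (swap a b * swap b d) (swap a d)) := by
        rw [← hconj]; exact pathForm_le_three F hp r _ _ _ _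
    _ = _ := by rw [leg₂, leg₃]

end PathForm

section ExtraCoordinate

variable {ι κ : Type*}

/- The extra coordinate `none` of a configuration on `Option ι` holds a proposed value. Put at
level `i`, swapping it with `some i` resamples coordinate `i` (`resampleForm_eq`), so resampling
moves and swap moves are both handled by `pathForm`. -/
def extendLevel (i : ι) : Option ι → ι := fun o => o.getD i

@[simp] lemma extendLevel_none (i : ι) : extendLevel i none = i := rfl

@[simp] lemma extendLevel_some (i j : ι) : extendLevel i (some j) = j := rfl

variable [Fintype ι] [DecidableEq ι] [Fintype κ] {p : ι → κ → ℝ}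

variable (p) (f : (ι → κ) → ℝ)

def resampleForm (i : ι) : ℝ :=
  pathForm p (fun c => f (c ∘ some)) (extendLevel i) 1 (swap none (some i))

def swapForm (base x y : ι) : ℝ :=
  pathForm p (fun c => f (c ∘ some)) (Function.update (extendLevel base) (some x) y) 1
    (swap (some x) (some y))

variable {p}

lemma sum_levelWeight_option (r : Option ι → ι) (G : κ → (ι → κ) → ℝ) :
    ∑ c : Option ι → κ, levelWeight p r c * G (c none) (c ∘ some) =
      ∑ τ, ∑ k, levelWeight p (r ∘ some) τ * p (r none) k * G k τ := by
  rw [← (piOptionEquivProd (β := fun _ => κ)).symm.sum_comp, Fintype.sum_prod_type, sum_comm]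
  refine sum_congr rfl fun τ _ => sum_congr rfl fun k _ => ?_
  simp [levelWeight, Fintype.prod_option, mul_comm, Function.comp_def]

lemma resampleForm_eq (i : ι) :
    resampleForm p f i =
      ∑ τ, ∑ k, (∏ j, p j (τ j)) * p i k * (f τ - f (Function.update τ i k)) ^ 2 := by
  have hc (c : Option ι → κ) :
      (c ∘ swap none (some i)) ∘ some = Function.update (c ∘ some) i (c none) := by
    ext j
    by_cases hj : j = i <;> simp [hj, swap_apply_of_ne_of_ne]
  simp only [resampleForm, pathForm, Perm.coe_one, Function.comp_id, hc]
  exact sum_levelWeight_option _ fun k τ => (f τ - f (Function.update τ i k)) ^ 2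

lemma mul_swapForm_le_sum_sq (hp : ∀ l k, 0 ≤ p l k) {B : ℝ} {base x y : ι}
    (hbase : ∑ k, p base k = 1) (hB : ∀ k, B * p y k ≤ p x k) :
    B * swapForm p f base x y ≤ ∑ τ, (∏ j, p j (τ j)) * (f τ - f (τ ∘ swap x y)) ^ 2 := by
  have hc (c : Option ι → κ) : (c ∘ swap (some x) (some y)) ∘ some = (c ∘ some) ∘ swap x y := by
    ext j
    simp [← optionCongr_swap]
  calc _ ≤ pathForm p (fun c => f (c ∘ some)) (extendLevel base) 1 (swap (some x) (some y)) :=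
        mul_pathForm_le _ hp (some x) (fun o ho => Function.update_of_ne ho _ _)
          (by simpa using hB) _ _
    _ = _ := by
        simp only [pathForm, Perm.coe_one, Function.comp_id, hc]
        rw [sum_levelWeight_option _ fun _ τ => (f τ - f (τ ∘ swap x y)) ^ 2]
        refine sum_congr rfl fun τ _ => ?_
        rw [← sum_mul, ← mul_sum, extendLevel_none, hbase, mul_one]
        rfl

lemma mul_swapForm_le_add (hp : ∀ l k, 0 ≤ p l k) {B : ℝ} (hB₀ : 0 ≤ B) (base : ι) {x y z : ι}
    (hxy : x ≠ y) (hyz : y ≠ z) (hxz : x ≠ z)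
    (hByx : ∀ k, B * p y k ≤ p x k) (hBzy : ∀ k, B * p z k ≤ p y k) :
    B * swapForm p f base x z ≤ 6 * swapForm p f base x y + 3 * swapForm p f base y z := by
  set F : (Option ι → κ) → ℝ := fun c => f (c ∘ some)
  set r := Function.update (extendLevel base) (some x) z
  have leg₁ : B * pathForm p F r 1 (swap (some x) (some y)) ≤ swapForm p f base x y :=
    mul_pathForm_le F hp (some x) (fun o ho => by simp [r, Function.update_of_ne ho])
      (by simpa [r] using hBzy) _ _
  have leg₂ : B * pathForm p F (r ∘ swap (some x) (some y)) 1 (swap (some y) (some z)) ≤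
      swapForm p f base y z := by
    refine mul_pathForm_le F hp (some x) (fun o ho => ?_) (fun k => ?_) _ _
    · rcases o with _ | j <;> simp [r, Function.update_apply, swap_apply_def]
      aesop
    · simpa [r, Function.update_apply, swap_apply_def, hxy, hxy.symm] using hByx k
  have leg₃ : B * pathForm p F (r ∘ swap (some x) (some y) ∘ swap (some y) (some z)) 1
      (swap (some x) (some y)) ≤ swapForm p f base x y := by
    refine mul_pathForm_le F hp (some y) (fun o ho => ?_) (fun k => ?_) _ _
    · rcases o with _ | j <;> simp [r, Function.update_apply, swap_apply_def]
      aesop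
    · simpa [r, Function.update_apply, swap_apply_def, hxy, hxy.symm, hyz.symm, hxz.symm]
        using hBzy k
  calc B * swapForm p f base x z
      ≤ B * (3 * (pathForm p F r 1 (swap (some x) (some y)) +
          pathForm p F (r ∘ swap (some x) (some y)) 1 (swap (some y) (some z)) +
          pathForm p F (r ∘ swap (some x) (some y) ∘ swap (some y) (some z)) 1
            (swap (some x) (some y)))) :=
        mul_le_mul_of_nonneg_left (pathForm_swap_le F hp r (by simpa using hyz)
          (by simpa using hxz)) hB₀
    _ ≤ _ := by linarith

lemma mul_resampleForm_le_add (hp : ∀ l k, 0 ≤ p l k) {B : ℝ} (hB₀ : 0 ≤ B) {a i : ι}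
    (hai : a ≠ i) (hB : ∀ k, B * p i k ≤ p a k) :
    B * resampleForm p f i ≤ 6 * resampleForm p f a + 3 * (B * swapForm p f a a i) := by
  set F : (Option ι → κ) → ℝ := fun c => f (c ∘ some)
  have leg₁ : B * pathForm p F (extendLevel i) 1 (swap none (some a)) ≤ resampleForm p f a :=
    mul_pathForm_le F hp none (fun o ho => by cases o <;> simp_all) (by simpa using hB) _ _
  have leg₂ : pathForm p F (extendLevel i ∘ swap none (some a)) 1 (swap (some a) (some i)) =
      swapForm p f a a i := by
    unfold swapForm
    congr 1
    ext o
    rcases o with _ | j <;> simp [Function.update_apply, swap_apply_def, apply_ite (extendLevel i)]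
  have leg₃ : B * pathForm p F (extendLevel i ∘ swap none (some a) ∘ swap (some a) (some i)) 1
      (swap none (some a)) ≤ resampleForm p f a := by
    refine mul_pathForm_le F hp (some a) (fun o ho => ?_) (fun k => ?_) _ _
    · rcases o with _ | j <;> simp [swap_apply_def]
      aesop
    · simpa [swap_apply_def, hai.symm] using hB k
  calc B * resampleForm p f i
      ≤ B * (3 * (pathForm p F (extendLevel i) 1 (swap none (some a)) +
          pathForm p F (extendLevel i ∘ swap none (some a)) 1 (swap (some a) (some i)) +
          pathForm p F (extendLevel i ∘ swap none (some a) ∘ swap (some a) (some i)) 1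
            (swap none (some a)))) :=
        mul_le_mul_of_nonneg_left (pathForm_swap_le F hp _ (by simpa using hai)
          (by simp)) hB₀
    _ ≤ _ := by rw [leg₂] at *; linarith

end ExtraCoordinate

section Resampling

variable {ι κ : Type*} [Fintype ι] [DecidableEq ι] [DecidableEq κ] (p : ι → κ → ℝ)

def resampleKernel (i : ι) (τ τ' : ι → κ) : ℝ :=
  if ∀ j, j ≠ i → τ' j = τ j then p i (τ' i) else 0

/- Stated for an arbitrary `Decidable` instance, so that it also rewrites the kernels of the
theorem, which are elaborated with `Nat.decidableForallFin` rather than the instance of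
`resampleKernel`. -/
lemma ite_eq_resampleKernel (i : ι) (τ τ' : ι → κ) {_ : Decidable (∀ j, j ≠ i → τ' j = τ j)} :
    (if ∀ j, j ≠ i → τ' j = τ j then p i (τ' i) else 0) = resampleKernel p i τ τ' := by
  unfold resampleKernel
  congr

lemma isReversible_resampleKernel (i : ι) :
    IsReversible (fun τ => ∏ j, p j (τ j)) (resampleKernel p i) := fun τ τ' => by
  dsimp only [resampleKernel]
  by_cases h : ∀ j, j ≠ i → τ' j = τ j
  · rw [if_pos h, if_pos fun j hj => (h j hj).symm, ← mul_prod_erase _ _ (mem_univ i),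
      ← mul_prod_erase _ _ (mem_univ i),
      prod_congr rfl fun j hj => congrArg (p j) (h j (ne_of_mem_erase hj))]
    ring
  · rw [if_neg h, if_neg fun h' => h fun j hj => (h' j hj).symm, mul_zero, mul_zero]

variable [Fintype κ]

lemma sum_resampleKernel_mul (i : ι) (τ : ι → κ) (G : (ι → κ) → ℝ) :
    ∑ τ', resampleKernel p i τ τ' * G τ' = ∑ k, p i k * G (Function.update τ i k) := by
  simp only [resampleKernel, ite_mul, zero_mul]
  rw [← sum_filter]
  refine sum_nbij' (fun τ' => τ' i) (fun k => Function.update τ i k) (by simp) ?_ ?_ (by simp) ?_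
  · intro k _
    simp +contextual [Function.update_of_ne]
  · intro τ' hτ'
    ext j
    by_cases hj : j = i
    · simp [hj]
    · simp_all
  · intro τ' hτ'
    have : Function.update τ i (τ' i) = τ' := by
      ext j
      by_cases hj : j = i
      · simp [hj]
      · simp_all
    rw [this]

lemma dirichletForm_resampleKernel (i : ι) (f : (ι → κ) → ℝ) :
    dirichletForm (fun τ => ∏ j, p j (τ j)) (resampleKernel p i) f =
      1 / 2 * resampleForm p f i := by
  rw [dirichletForm, resampleForm_eq]
  congr 1
  refine sum_congr rfl fun τ _ => ?_
  simp only [mul_assoc, ← mul_sum]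
  rw [sum_resampleKernel_mul]

end Resampling

lemma mul_le_of_le_prod_min_div {L : ℕ} {a : Fin (L + 1) → ℝ} (ha : ∀ i, 0 < a i) {B : ℝ}
    (hB : B ≤ ∏ i : Fin L, min 1 (a i.castSucc / a i.succ)) {x y : Fin (L + 1)} (hxy : x ≤ y) :
    B * a y ≤ a x := by
  set μ : Fin L → ℝ := fun i => min 1 (a i.castSucc / a i.succ)
  have hμ₀ (i : Fin L) : 0 ≤ μ i := le_min zero_le_one (div_pos (ha _) (ha _)).le
  have hμa (i : Fin L) : μ i * a i.succ ≤ a i.castSucc :=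
    (le_div_iff₀ (ha _)).1 (min_le_right _ _)
  set Φ : Fin (L + 1) → ℝ := fun z => a z * ∏ j ∈ univ.filter (·.castSucc < z), μ j
  have hΦ : Antitone Φ := by
    refine Fin.antitone_iff_succ_le.2 fun i => ?_
    have hset : univ.filter (fun j : Fin L => j.castSucc < i.succ) =
        insert i (univ.filter (fun j : Fin L => j.castSucc < i.castSucc)) := by
      ext j
      simp only [mem_filter, mem_univ, true_and, mem_insert, Fin.lt_def, Fin.ext_iff,
        Fin.val_castSucc, Fin.val_succ]
      omega
    simp only [Φ]
    rw [hset, prod_insert (by simp), ← mul_assoc, mul_comm (a i.succ)]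
    exact mul_le_mul_of_nonneg_right (hμa i) (prod_nonneg fun j _ => hμ₀ j)
  calc B * a y ≤ (∏ i, μ i) * a y := mul_le_mul_of_nonneg_right hB (ha y).le
    _ ≤ Φ y := by
      rw [mul_comm]
      refine mul_le_mul_of_nonneg_left (prod_le_prod_of_subset_of_le_one (filter_subset _ _)
        (fun i _ => hμ₀ i) fun i _ _ => min_le_left _ _) (ha y).le
    _ ≤ Φ x := hΦ hxy
    _ ≤ a x := mul_le_of_le_one_right (ha x).le
        (prod_le_one (fun i _ => hμ₀ i) fun i _ => min_le_left _ _)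

lemma pow_mul_le_of_adjacent_of_split {n : ℕ} {Y : Fin (n + 1) → Fin (n + 1) → ℝ} {A B : ℝ}
    (hA : 0 ≤ A) (hB₀ : 0 ≤ B) (hB₁ : B ≤ 1)
    (hadj : ∀ i : Fin n, B * Y i.castSucc i.succ ≤ A)
    (hsplit : ∀ x y z, x < y → y < z → B * Y x z ≤ 6 * Y x y + 3 * Y y z) (t : ℕ) :
    ∀ x z : Fin (n + 1), x < z → (z : ℕ) ≤ x + 2 ^ t → B ^ (t + 1) * Y x z ≤ 9 ^ t * A := by
  induction t with
  | zero =>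
    intro x z hxz hzx
    have hx : (x : ℕ) < n := by omega
    obtain rfl : z = (⟨x, hx⟩ : Fin n).succ := Fin.ext (by simp; omega)
    simpa using hadj ⟨x, hx⟩
  | succ t ih =>
    intro x z hxz hzx
    by_cases hnear : (z : ℕ) ≤ x + 2 ^ t
    · calc B ^ (t + 1 + 1) * Y x z = B * (B ^ (t + 1) * Y x z) := by ring
        _ ≤ B * (9 ^ t * A) := mul_le_mul_of_nonneg_left (ih x z hxz hnear) hB₀
        _ ≤ 9 ^ (t + 1) * A := by
          have h9 : 0 ≤ 9 ^ t * A := by positivity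
          rw [pow_succ]
          nlinarith
    · set y : Fin (n + 1) := ⟨x + 2 ^ t, by omega⟩
      have hxy : x < y := Fin.lt_def.2 (by simp [y])
      have hyz : y < z := Fin.lt_def.2 (by simp [y]; omega)
      calc B ^ (t + 1 + 1) * Y x z = B ^ (t + 1) * (B * Y x z) := by ring
        _ ≤ B ^ (t + 1) * (6 * Y x y + 3 * Y y z) :=
          mul_le_mul_of_nonneg_left (hsplit x y z hxy hyz) (pow_nonneg hB₀ _)
        _ = 6 * (B ^ (t + 1) * Y x y) + 3 * (B ^ (t + 1) * Y y z) := by ring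
        _ ≤ 6 * (9 ^ t * A) + 3 * (9 ^ t * A) := by
          have hxy' := ih x y hxy (by simp [y])
          have hyz' := ih y z hyz (by simp [y]; omega)
          linarith
        _ = 9 ^ (t + 1) * A := by ring

lemma two_pow_log_le {L : ℕ} (hL : L ≠ 0) : ((2 ^ Nat.log 2 L : ℕ) : ℝ) ≤ (L : ℝ) + 1 := by
  exact_mod_cast (Nat.pow_log_le_self 2 hL).trans (Nat.le_succ L)

lemma nat_log_le_logb {L : ℕ} (hL : L ≠ 0) : (Nat.log 2 L : ℝ) ≤ logb 2 ((L : ℝ) + 1) := by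
  rw [le_logb_iff_rpow_le one_lt_two (by positivity), rpow_natCast]
  exact_mod_cast two_pow_log_le hL

lemma nine_pow_log_le {L : ℕ} (hL : L ≠ 0) :
    (9 : ℝ) ^ Nat.log 2 L ≤ ((L : ℝ) + 1) ^ (2 * logb 2 3) := by
  have h9 : (2 : ℝ) ^ (2 * logb 2 3) = 9 := by
    rw [mul_comm, rpow_mul two_pos.le, rpow_logb two_pos one_lt_two.ne' three_pos]
    norm_num
  calc (9 : ℝ) ^ Nat.log 2 L = ((2 : ℝ) ^ Nat.log 2 L) ^ (2 * logb 2 3) := by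
        rw [← h9, ← rpow_natCast, ← rpow_natCast (2 : ℝ), ← rpow_mul two_pos.le,
          ← rpow_mul two_pos.le, mul_comm]
    _ ≤ _ := rpow_le_rpow (by positivity) (by exact_mod_cast two_pow_log_le hL)
        (mul_nonneg zero_le_two (logb_nonneg one_lt_two (by norm_num)))

lemma comparison_constant_le {L m : ℕ} (hL : L ≠ 0) (hm : m ≠ 0) {φ B : ℝ} (hφ₀ : 0 < φ)
    (hφ₁ : φ ≤ 1) (hB₀ : 0 < B) (hB₁ : B ≤ 1) :
    (B ^ (Nat.log 2 L + 2))⁻¹ * (12 * ((L + 1) + 9 ^ (Nat.log 2 L + 1) * L / φ ^ 2)) ≤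
      120 * (m : ℝ) ^ 3 * ((L : ℝ) + 1) ^ (1 + 2 * logb 2 3) * (φ ^ 2)⁻¹ *
        B ^ (-(120 * (1 + logb 2 ((L : ℝ) + 1)))) := by
  have hlog := nat_log_le_logb hL
  have hlog₀ : 0 ≤ logb 2 ((L : ℝ) + 1) := logb_nonneg one_lt_two (by simp)
  have hBpow : (B ^ (Nat.log 2 L + 2))⁻¹ ≤ B ^ (-(120 * (1 + logb 2 ((L : ℝ) + 1)))) := by
    rw [← rpow_natCast, ← rpow_neg hB₀.le]
    exact rpow_le_rpow_of_exponent_ge hB₀ hB₁ (by push_cast; linarith)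
  set X := ((L : ℝ) + 1) ^ (2 * logb 2 3)
  have hX : 1 ≤ X :=
    one_le_rpow (by simp) (mul_nonneg zero_le_two (logb_nonneg one_lt_two (by norm_num)))
  have h9 : (9 : ℝ) ^ (Nat.log 2 L + 1) ≤ 9 * X := by
    rw [pow_succ, mul_comm]; gcongr; exact nine_pow_log_le hL
  have hu : 1 ≤ (φ ^ 2)⁻¹ := one_le_inv₀ (by positivity) |>.2 (pow_le_one₀ hφ₀.le hφ₁)
  have hm3 : (1 : ℝ) ≤ (m : ℝ) ^ 3 := one_le_pow₀ (by exact_mod_cast Nat.one_le_iff_ne_zero.2 hm)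
  have hK : 12 * ((L + 1) + 9 ^ (Nat.log 2 L + 1) * L / φ ^ 2) ≤
      120 * (m : ℝ) ^ 3 * ((L : ℝ) + 1) ^ (1 + 2 * logb 2 3) * (φ ^ 2)⁻¹ := by
    rw [rpow_add (by positivity), rpow_one, div_eq_mul_inv]
    have h1 : ((L : ℝ) + 1) ≤ (L + 1) * X * (φ ^ 2)⁻¹ := by
      nlinarith [mul_le_mul hX hu zero_le_one (by linarith)]
    have h2 : 9 ^ (Nat.log 2 L + 1) * (L : ℝ) * (φ ^ 2)⁻¹ ≤ 9 * X * (L + 1) * (φ ^ 2)⁻¹ := by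
      gcongr
      linarith
    nlinarith [mul_le_mul_of_nonneg_right hm3 (by positivity : (0:ℝ) ≤ (L + 1) * X * (φ ^ 2)⁻¹)]
  calc _ ≤ B ^ (-(120 * (1 + logb 2 ((L : ℝ) + 1)))) *
        (120 * (m : ℝ) ^ 3 * ((L : ℝ) + 1) ^ (1 + 2 * logb 2 3) * (φ ^ 2)⁻¹) :=
        mul_le_mul hBpow hK (by positivity) (by positivity)
    _ = _ := mul_comm _ _

section Comparison

variable {L m : ℕ} {p : Fin (L + 1) → Fin m → ℝ}
  {Q : (Fin (L + 1) → Fin m) → (Fin (L + 1) → Fin m) → ℝ} {φ B : ℝ} (f : (Fin (L + 1) → Fin m) → ℝ)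

local notation "π̄" => fun τ : Fin (L + 1) → Fin m => ∏ i, p i (τ i)

lemma mul_swapForm_succ_le (hp : ∀ i k, 0 < p i k) (hsum : ∀ i, ∑ k, p i k = 1) (hφ : 0 < φ)
    (hL : L ≠ 0) (hQ₀ : ∀ τ τ', 0 ≤ Q τ τ')
    (hQswap : ∀ τ (i : Fin L), Q τ (τ ∘ swap i.castSucc i.succ) ≥ φ ^ 2 / (2 * (L : ℝ)))
    (hB : ∀ k, B ≤ ∏ i : Fin L, min 1 (p i.castSucc k / p i.succ k)) (i : Fin L) :
    B * swapForm p f 0 i.castSucc i.succ ≤ 4 * L / φ ^ 2 * dirichletForm π̄ Q f := by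
  have hε : 0 < φ ^ 2 / (2 * (L : ℝ)) := by positivity
  have hcmp := mul_sum_sq_le_dirichletForm (μ := π̄) (fun τ => prod_nonneg fun j _ => (hp j _).le)
    hQ₀ (fun τ => hQswap τ i) f
  calc _ ≤ ∑ τ, (∏ j, p j (τ j)) * (f τ - f (τ ∘ swap i.castSucc i.succ)) ^ 2 :=
        mul_swapForm_le_sum_sq f (fun j k => (hp j k).le) (hsum 0)
          fun k => mul_le_of_le_prod_min_div (fun j => hp j k) (hB k) Fin.castSucc_lt_succ.le
    _ ≤ _ := by
        rw [← le_div_iff₀' hε] at hcmp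
        refine hcmp.trans (le_of_eq ?_)
        field_simp
        ring

lemma pow_mul_resampleForm_le (hp : ∀ i k, 0 < p i k) (hsum : ∀ i, ∑ k, p i k = 1) (hφ : 0 < φ)
    (hL : L ≠ 0) (hQ₀ : ∀ τ τ', 0 ≤ Q τ τ')
    (hQswap : ∀ τ (i : Fin L), Q τ (τ ∘ swap i.castSucc i.succ) ≥ φ ^ 2 / (2 * (L : ℝ)))
    (hB₀ : 0 ≤ B) (hB₁ : B ≤ 1) (hB : ∀ k, B ≤ ∏ i : Fin L, min 1 (p i.castSucc k / p i.succ k))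
    (i : Fin (L + 1)) :
    B ^ (Nat.log 2 L + 2) * resampleForm p f i ≤
      6 * resampleForm p f 0 +
        3 * (9 ^ (Nat.log 2 L + 1) * (4 * L / φ ^ 2 * dirichletForm π̄ Q f)) := by
  have hp₀ : ∀ i k, 0 ≤ p i k := fun i k => (hp i k).le
  have hwindow {x y : Fin (L + 1)} (hxy : x ≤ y) (k : Fin m) : B * p y k ≤ p x k :=
    mul_le_of_le_prod_min_div (fun j => hp j k) (hB k) hxy
  have hA : 0 ≤ 4 * L / φ ^ 2 * dirichletForm π̄ Q f :=
    mul_nonneg (by positivity)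
      (dirichletForm_nonneg (fun τ => prod_nonneg fun j _ => hp₀ j _) hQ₀ f)
  have h9A : 0 ≤ 9 ^ (Nat.log 2 L + 1) * (4 * L / φ ^ 2 * dirichletForm π̄ Q f) :=
    mul_nonneg (by positivity) hA
  have hW₀ : 0 ≤ resampleForm p f 0 := pathForm_nonneg _ hp₀ _ _ _
  rcases eq_or_ne i 0 with rfl | hi
  · have := mul_le_of_le_one_left hW₀ (pow_le_one₀ hB₀ hB₁ : B ^ (Nat.log 2 L + 2) ≤ 1)
    linarith
  have hY := pow_mul_le_of_adjacent_of_split (Y := swapForm p f 0) hA hB₀ hB₁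
    (mul_swapForm_succ_le f hp hsum hφ hL hQ₀ hQswap hB)
    (fun x y z hxy hyz => mul_swapForm_le_add f hp₀ hB₀ 0 hxy.ne hyz.ne (hxy.trans hyz).ne
      (hwindow hxy.le) (hwindow hyz.le))
    (Nat.log 2 L + 1) 0 i (Fin.pos_iff_ne_zero.2 hi)
    (by simpa using (Nat.lt_pow_succ_log_self one_lt_two L).le.trans' (Nat.lt_succ_iff.1 i.isLt))
  have hW := mul_resampleForm_le_add f hp₀ hB₀ hi.symm (hwindow (Fin.zero_le i))
  calc B ^ (Nat.log 2 L + 2) * resampleForm p f i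
      = B ^ (Nat.log 2 L + 1) * (B * resampleForm p f i) := by ring
    _ ≤ B ^ (Nat.log 2 L + 1) * (6 * resampleForm p f 0 + 3 * (B * swapForm p f 0 0 i)) :=
        mul_le_mul_of_nonneg_left hW (pow_nonneg hB₀ _)
    _ = 6 * (B ^ (Nat.log 2 L + 1) * resampleForm p f 0) +
          3 * (B ^ (Nat.log 2 L + 1 + 1) * swapForm p f 0 0 i) := by ring
    _ ≤ _ := by
        have := mul_le_of_le_one_left hW₀ (pow_le_one₀ hB₀ hB₁ : B ^ (Nat.log 2 L + 1) ≤ 1)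
        linarith

lemma dirichletForm_resampling_le (hp : ∀ i k, 0 < p i k) (hsum : ∀ i, ∑ k, p i k = 1)
    (hm : m ≠ 0) (hφ₀ : 0 < φ) (hφ₁ : φ ≤ 1) (hL : L ≠ 0) (hQ₀ : ∀ τ τ', 0 ≤ Q τ τ')
    (hQswap : ∀ τ (i : Fin L), Q τ (τ ∘ swap i.castSucc i.succ) ≥ φ ^ 2 / (2 * (L : ℝ)))
    (hB₀ : 0 < B) (hB₁ : B ≤ 1) (hB : ∀ k, B ≤ ∏ i : Fin L, min 1 (p i.castSucc k / p i.succ k))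
    (c : ℝ) :
    dirichletForm π̄ (fun τ τ' => 1 / ((L : ℝ) + 1) * ∑ i, resampleKernel p i τ τ') f ≤
      120 * (m : ℝ) ^ 3 * ((L : ℝ) + 1) ^ (1 + 2 * logb 2 3) * (φ ^ 2)⁻¹ *
        B ^ (-(120 * (1 + logb 2 ((L : ℝ) + 1)))) *
        dirichletForm π̄ (fun τ τ' => 1 / 2 * Q τ τ' +
          1 / (2 * ((L : ℝ) + 1)) * resampleKernel p 0 τ τ' + if τ' = τ then c else 0) f := by
  simp only [dirichletForm_add, dirichletForm_const_mul, dirichletForm_sum, dirichletForm_diag,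
    dirichletForm_resampleKernel]
  have hW₀ : 0 ≤ resampleForm p f 0 := pathForm_nonneg _ (fun i k => (hp i k).le) _ _ _
  have hD : 0 ≤ dirichletForm π̄ Q f :=
    dirichletForm_nonneg (fun τ => prod_nonneg fun j _ => (hp j _).le) hQ₀ f
  refine le_trans ?_ (mul_le_mul_of_nonneg_right
    (comparison_constant_le hL hm hφ₀ hφ₁ hB₀ hB₁) (by positivity))
  rw [mul_assoc, le_inv_mul_iff₀ (pow_pos hB₀ _), ← mul_sum]
  set n := Nat.log 2 L
  set D := dirichletForm π̄ Q f
  set u : ℝ := 9 ^ (n + 1) * L / φ ^ 2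
  have hu : 0 ≤ u := by positivity
  have hWsum : B ^ (n + 2) * ∑ i, resampleForm p f i ≤
      (L + 1) * (6 * resampleForm p f 0 + 12 * u * D) := by
    rw [mul_sum]
    calc _ ≤ ∑ _i : Fin (L + 1), (6 * resampleForm p f 0 + 12 * u * D) :=
          sum_le_sum fun i _ => (pow_mul_resampleForm_le f hp hsum hφ₀ hL hQ₀ hQswap hB₀.le hB₁
            hB i).trans_eq (by simp only [u]; field_simp; ring)
      _ = _ := by simp; ring
  clear_value n D u
  calc _ = B ^ (n + 2) * (∑ i, resampleForm p f i) / (2 * (L + 1)) := by field_simp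
    _ ≤ (L + 1) * (6 * resampleForm p f 0 + 12 * u * D) / (2 * (L + 1)) := by gcongr
    _ = 3 * resampleForm p f 0 + 6 * u * D := by field_simp; ring
    _ ≤ 3 * resampleForm p f 0 + 6 * u * D +
          (6 * (L + 1) * D + 3 * u * resampleForm p f 0 / (L + 1)) := by
        have : 0 ≤ 3 * u * resampleForm p f 0 / (L + 1) := by positivity
        nlinarith
    _ = _ := by field_simp; ring

end Comparison

end ParallelTempering

open ParallelTempering

/-- Dirichlet-form comparison behind the main lower bound: there is an
absolute constant `C > 0` such that for all `L ≥ 1`, `m ≥ 2`, every `p : {0,…,L}×{1,…,m} →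
(0,1]` with unit row sums (modes `{1,…,m}` encoded as `Fin m`, levels `{0,…,L}` as
`Fin (L+1)`), with `π̄(λ) = Π_i p(i, λ_i)` and bottleneck ratio
`B = min_k Π_{i=1}^{L} min{1, p(i−1,k)/p(i,k)}`, every `φ ∈ (0,1]`, and every `π̄`-reversible
transition matrix `Q` with `Q(τ, (i−1 i)τ) ≥ φ²/(2L)`, the chains
`P₁ = (1/2)Q + (1/(2(L+1)))R₀ + (1/2 − 1/(2(L+1)))I` and the random-scan resampling chain
`P₂` are both `π̄`-reversible and satisfy
`E_{P₂}(f) ≤ C m³ (L+1)^{1+2log₂3} φ⁻² B^{−C(1+log₂(L+1))} E_{P₁}(f)` for all `f`. -/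
theorem stmt_18 : ∃ C : ℝ, 0 < C ∧
    ∀ (L m : ℕ), 1 ≤ L → ∀ hm : 2 ≤ m,
    ∀ p : Fin (L + 1) → Fin m → ℝ,
    (∀ i k, 0 < p i k ∧ p i k ≤ 1) →
    (∀ i, ∑ k, p i k = 1) →
    ∀ φ : ℝ, 0 < φ → φ ≤ 1 →
    ∀ Q : (Fin (L + 1) → Fin m) → (Fin (L + 1) → Fin m) → ℝ,
    (∀ τ τ', 0 ≤ Q τ τ') →
    (∀ τ, ∑ τ', Q τ τ' = 1) →
    (∀ τ τ', (∏ i, p i (τ i)) * Q τ τ' = (∏ i, p i (τ' i)) * Q τ' τ) →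
    (∀ (τ : Fin (L + 1) → Fin m) (i : Fin L),
      Q τ (τ ∘ Equiv.swap i.castSucc i.succ) ≥ φ ^ 2 / (2 * (L : ℝ))) →
    ∀ Pone Ptwo : (Fin (L + 1) → Fin m) → (Fin (L + 1) → Fin m) → ℝ,
    (∀ τ τ', Pone τ τ' =
      1 / 2 * Q τ τ' +
        1 / (2 * ((L : ℝ) + 1)) *
          (if ∀ j, j ≠ 0 → τ' j = τ j then p 0 (τ' 0) else 0) +
        (if τ' = τ then 1 / 2 - 1 / (2 * ((L : ℝ) + 1)) else 0)) →
    (∀ τ τ', Ptwo τ τ' =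
      1 / ((L : ℝ) + 1) *
        ∑ i, (if ∀ j, j ≠ i → τ' j = τ j then p i (τ' i) else 0)) →
    ((∀ τ τ', (∏ i, p i (τ i)) * Pone τ τ' = (∏ i, p i (τ' i)) * Pone τ' τ) ∧
     (∀ τ τ', (∏ i, p i (τ i)) * Ptwo τ τ' = (∏ i, p i (τ' i)) * Ptwo τ' τ) ∧
     ∀ f : (Fin (L + 1) → Fin m) → ℝ,
       1 / 2 * ∑ τ, ∑ τ', (∏ i, p i (τ i)) * Ptwo τ τ' * (f τ - f τ') ^ 2 ≤
         C * (m : ℝ) ^ 3 * ((L : ℝ) + 1) ^ (1 + 2 * Real.logb 2 3) * (φ ^ 2)⁻¹ *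
           (Finset.univ.inf' ⟨⟨0, by omega⟩, Finset.mem_univ _⟩
              (fun k : Fin m => ∏ i : Fin L, min 1 (p i.castSucc k / p i.succ k))) ^
             (-(C * (1 + Real.logb 2 ((L : ℝ) + 1)))) *
           (1 / 2 * ∑ τ, ∑ τ', (∏ i, p i (τ i)) * Pone τ τ' * (f τ - f τ') ^ 2)) := by
  refine ⟨120, by norm_num,
    fun L m hL hm p hp hsum φ hφ₀ hφ₁ Q hQ₀ _ hQrev hQswap P₁ P₂ hP₁ hP₂ => ?_⟩
  simp only [ite_eq_resampleKernel] at hP₁ hP₂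
  obtain rfl := funext₂ hP₁
  obtain rfl := funext₂ hP₂
  have hp₀ (i k) : 0 < p i k := (hp i k).1
  set B := univ.inf' ⟨⟨0, by omega⟩, mem_univ _⟩
    fun k : Fin m => ∏ i : Fin L, min 1 (p i.castSucc k / p i.succ k)
  have hB (k : Fin m) : B ≤ ∏ i : Fin L, min 1 (p i.castSucc k / p i.succ k) :=
    inf'_le _ (mem_univ k)
  have hB₀ : 0 < B := (lt_inf'_iff _).2 fun k _ =>
    prod_pos fun i _ => lt_min one_pos (div_pos (hp₀ _ _) (hp₀ _ _))
  have hB₁ : B ≤ 1 := (hB ⟨0, by omega⟩).trans <|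
    prod_le_one (fun i _ => le_min zero_le_one (div_pos (hp₀ _ _) (hp₀ _ _)).le)
      fun i _ => min_le_left _ _
  exact ⟨((IsReversible.const_mul hQrev _).add ((isReversible_resampleKernel p 0).const_mul _)).add
      (isReversible_diag _),
    (IsReversible.sum univ fun i _ => isReversible_resampleKernel p i).const_mul _,
    fun f => dirichletForm_resampling_le f hp₀ hsum (by omega) hφ₀ hφ₁ (by omega) hQ₀ hQswap
      hB₀ hB₁ hB _⟩
end
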